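/- (Tensorization of approximate Shearer for products.) Let μ = ⊗_{i=1}^n μ_i be a product of arbitrary probability measures μ_i on finite spaces Ω_i = [q_i]^{L_i}. If each μ_i satisfies the approximate Shearer inequality with constant C_i (i.e., for all weights α^i over subsets of its vertex set V_i and all g ≥ 0: γ_i(α^i) Ent_{μ_i}(g) ≤ C_i Σ_U α^i_U μ_i(Ent_U g)), then μ satisfies the approximate Shearer inequality on the full vertex set V = V_1 ∪ ⋯ ∪ V_n with constant C = max_i C_i. -/
import Mathlib


open Finset
open scoped Classical

set_option maxHeartbeats 1000000
set_option linter.unusedSectionVars false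
set_option linter.unusedVariables false

noncomputable section

/-- Entropy of `f` with respect to weights `μ`. -/
def ent {X : Type*} [Fintype X] (μ f : X → ℝ) : ℝ :=
  (∑ x, μ x * (f x * Real.log (f x))) - (∑ x, μ x * f x) * Real.log (∑ x, μ x * f x)

/-- Conditional measure on a block `A` of coordinates given `τ` outside `A`,
for configurations with coordinate-dependent spin spaces. -/
def condMeasD {ι : Type*} [Fintype ι] {κ : ι → Type*} [∀ p, Fintype (κ p)]
    (μ : (∀ p, κ p) → ℝ) (A : Finset ι) (τ : ∀ p, κ p) : (∀ p, κ p) → ℝ :=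
  fun σ => (if ∀ p ∉ A, σ p = τ p then μ σ else 0) /
    (∑ σ', if ∀ p ∉ A, σ' p = τ p then μ σ' else 0)

/-- The conditional entropy `Ent_A f : τ ↦ Ent_{μ_A^τ} f`. -/
def entAD {ι : Type*} [Fintype ι] {κ : ι → Type*} [∀ p, Fintype (κ p)]
    (μ : (∀ p, κ p) → ℝ) (A : Finset ι) (f : (∀ p, κ p) → ℝ) : (∀ p, κ p) → ℝ :=
  fun τ => ent (condMeasD μ A τ) f

/-- Minimum covering probability `γ(α) = min_{x} Σ_{A ∋ x} α_A`. -/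
def gamD {ι : Type*} [Fintype ι] (α : Finset ι → ℝ) : ℝ :=
  ⨅ p : ι, ∑ A ∈ univ.filter (fun A => p ∈ A), α A

section General

variable {ι : Type*} [Fintype ι] [DecidableEq ι] {κ : ι → Type*} [∀ p, Fintype (κ p)] [∀ p, DecidableEq (κ p)]

/-- entropy does not depend on the `Fintype` instance -/
lemma ent_inst {X : Type*} {i1 i2 : Fintype X} (μ f : X → ℝ) :
    @ent X i1 μ f = @ent X i2 μ f := by
  cases Subsingleton.elim i1 i2
  rfl

lemma sum_inst {X : Type*} {i1 i2 : Fintype X} (F : X → ℝ) :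
    @Finset.sum X ℝ _ (@Finset.univ X i1) F = @Finset.sum X ℝ _ (@Finset.univ X i2) F := by
  cases Subsingleton.elim i1 i2
  rfl

lemma ite_inst {c : Prop} {i1 i2 : Decidable c} (a b : ℝ) :
    @ite ℝ c i1 a b = @ite ℝ c i2 a b := by
  cases Subsingleton.elim i1 i2
  rfl

lemma sum_inst_congr {X : Type*} {i1 i2 : Fintype X} {F G : X → ℝ} (h : ∀ x, F x = G x) :
    @Finset.sum X ℝ _ (@Finset.univ X i1) F = @Finset.sum X ℝ _ (@Finset.univ X i2) G := by
  cases Subsingleton.elim i1 i2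
  exact Finset.sum_congr rfl fun x _ => h x

/-- fiber normalization -/
def ZD (μ : (∀ p, κ p) → ℝ) (A : Finset ι) (τ : ∀ p, κ p) : ℝ :=
  ∑ σ', if ∀ p ∉ A, σ' p = τ p then μ σ' else 0

def condExpD (μ : (∀ p, κ p) → ℝ) (A : Finset ι) (f : (∀ p, κ p) → ℝ) : (∀ p, κ p) → ℝ :=
  fun τ => ∑ σ, condMeasD μ A τ σ * f σ

lemma ZD_def (μ : (∀ p, κ p) → ℝ) (A : Finset ι) (τ : ∀ p, κ p) :
    ZD μ A τ = ∑ σ', if ∀ p ∉ A, σ' p = τ p then μ σ' else 0 := rfl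

variable {μ ν f g : (∀ p, κ p) → ℝ} {A B : Finset ι} {τ τ0 σ : ∀ p, κ p}

lemma condMeasD_eq : condMeasD μ A τ σ = (if ∀ p ∉ A, σ p = τ p then μ σ else 0) / ZD μ A τ := by
  unfold condMeasD ZD
  congr 1
  · exact ite_inst _ _
  · exact sum_inst_congr fun σ' => ite_inst _ _

lemma entAD_eq : entAD μ A f τ = ent (condMeasD μ A τ) f := ent_inst _ _


lemma ZD_nonneg (h : ∀ σ, 0 ≤ μ σ) : 0 ≤ ZD μ A τ :=
  Finset.sum_nonneg fun σ _ => by split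
                                  · exact h σ
                                  · exact le_rfl

lemma ZD_pos_of (h : ∀ σ, 0 ≤ μ σ) (hτ : μ τ ≠ 0) : 0 < ZD μ A τ := by
  have h0 : 0 < μ τ := lt_of_le_of_ne (h τ) (Ne.symm hτ)
  have h1 : (if ∀ p ∉ A, τ p = τ p then μ τ else 0) ≤ ZD μ A τ := by
    refine Finset.single_le_sum (f := fun σ' => if ∀ p ∉ A, σ' p = τ p then μ σ' else 0)
      (fun σ _ => ?_) (mem_univ τ)
    split
    · exact h σ
    · exact le_rfl
  rw [if_pos fun p _ => rfl] at h1
  exact lt_of_lt_of_le h0 h1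

lemma ZD_pos (hpos : ∀ σ, 0 < μ σ) : 0 < ZD μ A τ :=
  ZD_pos_of (fun σ => (hpos σ).le) (hpos τ).ne'

lemma condMeasD_nonneg (h : ∀ σ, 0 ≤ μ σ) : 0 ≤ condMeasD μ A τ σ := by
  rw [condMeasD_eq]
  refine div_nonneg ?_ (ZD_nonneg h)
  split
  · exact h σ
  · exact le_rfl

lemma sum_condMeasD (h : ∀ σ, 0 ≤ μ σ) (hZ : ZD μ A τ ≠ 0) : ∑ σ, condMeasD μ A τ σ = 1 := by
  simp only [condMeasD_eq]
  rw [← Finset.sum_div]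
  exact div_self hZ

lemma sum_condMeasD' (hpos : ∀ σ, 0 < μ σ) : ∑ σ, condMeasD μ A τ σ = 1 :=
  sum_condMeasD (fun σ => (hpos σ).le) (ZD_pos hpos).ne'

lemma fiber_symm (h : ∀ p ∉ A, σ p = τ p) : ∀ σ' : ∀ p, κ p,
    (∀ p ∉ A, σ' p = σ p) ↔ (∀ p ∉ A, σ' p = τ p) :=
  fun σ' => ⟨fun h' p hp => (h' p hp).trans (h p hp), fun h' p hp => (h' p hp).trans (h p hp).symm⟩

lemma ZD_congr (h : ∀ p ∉ A, σ p = τ p) : ZD μ A σ = ZD μ A τ :=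
  Finset.sum_congr rfl fun σ' _ => if_congr (fiber_symm h σ') rfl rfl

/-- key identity (K): averaging the conditional measure recovers the measure -/
lemma sum_mul_condMeasD (h : ∀ σ, 0 ≤ ν σ) : ∑ τ, ν τ * condMeasD ν A τ σ = ν σ := by
  by_cases hσ : ν σ = 0
  · rw [hσ]
    refine Finset.sum_eq_zero fun τ _ => ?_
    rw [condMeasD_eq, hσ]
    simp
  · have hZσ : ZD ν A σ ≠ 0 := (ZD_pos_of h hσ).ne'
    have key : ∀ τ : ∀ p, κ p, ν τ * condMeasD ν A τ σ
        = (if ∀ p ∉ A, τ p = σ p then ν τ else 0) * (ν σ / ZD ν A σ) := by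
      intro τ
      by_cases hfib : ∀ p ∉ A, σ p = τ p
      · have hfib' : ∀ p ∉ A, τ p = σ p := fun p hp => (hfib p hp).symm
        rw [condMeasD_eq, if_pos hfib, if_pos hfib', ← ZD_congr hfib]
      · have hfib' : ¬ ∀ p ∉ A, τ p = σ p := fun hc => hfib fun p hp => (hc p hp).symm
        rw [condMeasD_eq, if_neg hfib, if_neg hfib']
        simp
    rw [Finset.sum_congr rfl fun τ _ => key τ, ← Finset.sum_mul]
    rw [show (∑ τ, if ∀ p ∉ A, τ p = σ p then ν τ else 0) = ZD ν A σ from rfl]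
    rw [mul_div_cancel₀ _ hZσ]

lemma sum_mul_condExpD (h : ∀ σ, 0 ≤ ν σ) : ∑ τ, ν τ * condExpD ν A f τ = ∑ σ, ν σ * f σ := by
  unfold condExpD
  simp only [Finset.mul_sum]
  rw [Finset.sum_comm]
  refine Finset.sum_congr rfl fun σ _ => ?_
  simp only [← mul_assoc]
  rw [← Finset.sum_mul, sum_mul_condMeasD h]



lemma hfun_ne {c : Prop} : True := trivial

lemma ent_congr (h : ∀ σ, ν σ ≠ 0 → f σ = g σ) : ent ν f = ent ν g := by
  unfold ent
  have e1 : ∀ σ ∈ (univ : Finset (∀ p, κ p)),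
      ν σ * (f σ * Real.log (f σ)) = ν σ * (g σ * Real.log (g σ)) := by
    intro σ _
    by_cases hν : ν σ = 0
    · rw [hν]; ring
    · rw [h σ hν]
  have e2 : ∀ σ ∈ (univ : Finset (∀ p, κ p)), ν σ * f σ = ν σ * g σ := by
    intro σ _
    by_cases hν : ν σ = 0
    · rw [hν]; ring
    · rw [h σ hν]
  rw [Finset.sum_congr rfl e1, Finset.sum_congr rfl e2]

lemma ent_const (hν1 : ∑ σ, ν σ = 1) (c : ℝ) : ent ν (fun _ => c) = 0 := by
  unfold ent
  rw [← Finset.sum_mul, ← Finset.sum_mul, hν1, one_mul, one_mul, sub_self]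

lemma ent_eq_zero_of_const_on_supp (hν1 : ∑ σ, ν σ = 1) (c : ℝ)
    (h : ∀ σ, ν σ ≠ 0 → f σ = c) : ent ν f = 0 := by
  rw [ent_congr (g := fun _ => c) h]
  exact ent_const hν1 c

lemma ent_eq_zero_of_mean_zero (hν : ∀ σ, 0 ≤ ν σ) (hf : ∀ σ, 0 ≤ f σ)
    (hm : ∑ σ, ν σ * f σ = 0) : ent ν f = 0 := by
  have hz : ∀ σ ∈ (univ : Finset (∀ p, κ p)), ν σ * f σ = 0 :=
    fun σ hσ => ((Finset.sum_eq_zero_iff_of_nonneg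
      (fun σ _ => mul_nonneg (hν σ) (hf σ))).1 hm) σ hσ
  unfold ent
  rw [hm]
  have : ∀ σ ∈ (univ : Finset (∀ p, κ p)), ν σ * (f σ * Real.log (f σ)) = 0 := by
    intro σ hσ
    have := hz σ hσ
    rcases mul_eq_zero.1 this with h | h
    · rw [h]; ring
    · rw [h]; simp
  rw [Finset.sum_eq_zero this]
  simp

/-- Gibbs' variational inequality -/
lemma gibbs (hν : ∀ σ, 0 ≤ ν σ) (hν1 : ∑ σ, ν σ = 1) (hf : ∀ σ, 0 ≤ f σ)
    {ρ : (∀ p, κ p) → ℝ} (hρ : ∀ σ, 0 ≤ ρ σ) (hρ1 : ∑ σ, ν σ * ρ σ = 1)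
    (hsupp : ∀ σ, ν σ ≠ 0 → f σ ≠ 0 → ρ σ ≠ 0) :
    ∑ σ, ν σ * (f σ * Real.log (ρ σ)) ≤ ent ν f := by
  set m := ∑ σ, ν σ * f σ with hm
  have hm0 : 0 ≤ m := Finset.sum_nonneg fun σ _ => mul_nonneg (hν σ) (hf σ)
  rcases eq_or_lt_of_le hm0 with hmz | hmpos
  · have := ent_eq_zero_of_mean_zero hν hf hmz.symm
    rw [this]
    apply le_of_eq
    refine Finset.sum_eq_zero fun σ _ => ?_
    have hz := ((Finset.sum_eq_zero_iff_of_nonneg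
      (fun σ _ => mul_nonneg (hν σ) (hf σ))).1 hmz.symm) σ (mem_univ σ)
    rcases mul_eq_zero.1 hz with h | h
    · rw [h]; ring
    · rw [h]; ring
  · -- pointwise claim
    have claim : ∀ σ, ν σ * f σ + ν σ * (f σ * Real.log m) ≤
        ν σ * (f σ * Real.log (f σ)) - ν σ * (f σ * Real.log (ρ σ)) + ν σ * (ρ σ * m) := by
      intro σ
      by_cases hν0 : ν σ = 0
      · rw [hν0]; simp
      · by_cases hf0 : f σ = 0
        · rw [hf0]
          have : 0 ≤ ν σ * (ρ σ * m) := mul_nonneg (hν σ) (mul_nonneg (hρ σ) hm0)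
          simpa using this
        · have hρ0 : ρ σ ≠ 0 := hsupp σ hν0 hf0
          have hfp : 0 < f σ := lt_of_le_of_ne (hf σ) (Ne.symm hf0)
          have hρp : 0 < ρ σ := lt_of_le_of_ne (hρ σ) (Ne.symm hρ0)
          have hx : (0:ℝ) < ρ σ * m / f σ := by positivity
          have hlog := Real.log_le_sub_one_of_pos hx
          rw [Real.log_div (by positivity) hfp.ne', Real.log_mul hρp.ne' hmpos.ne'] at hlog
          have hmul := mul_le_mul_of_nonneg_left hlog hfp.le
          have hfield : f σ * (ρ σ * m / f σ - 1) = ρ σ * m - f σ := by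
            field_simp
          rw [hfield] at hmul
          have := mul_le_mul_of_nonneg_left hmul (hν σ)
          nlinarith [this]
    have hsum := Finset.sum_le_sum (fun σ (_ : σ ∈ (univ : Finset (∀ p, κ p))) => claim σ)
    rw [Finset.sum_add_distrib] at hsum
    rw [show (∑ σ, (ν σ * (f σ * Real.log (f σ)) - ν σ * (f σ * Real.log (ρ σ)) + ν σ * (ρ σ * m)))
        = (∑ σ, ν σ * (f σ * Real.log (f σ))) - (∑ σ, ν σ * (f σ * Real.log (ρ σ)))
          + (∑ σ, ν σ * (ρ σ * m)) by
      rw [Finset.sum_add_distrib, Finset.sum_sub_distrib]] at hsum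
    have e1 : ∑ σ, ν σ * (f σ * Real.log m) = m * Real.log m := by
      rw [show (∑ σ, ν σ * (f σ * Real.log m)) = (∑ σ, ν σ * f σ) * Real.log m by
        rw [Finset.sum_mul]
        exact Finset.sum_congr rfl fun σ _ => by ring]
    have e2 : ∑ σ, ν σ * (ρ σ * m) = m := by
      rw [show (∑ σ, ν σ * (ρ σ * m)) = (∑ σ, ν σ * ρ σ) * m by
        rw [Finset.sum_mul]
        exact Finset.sum_congr rfl fun σ _ => by ring]
      rw [hρ1, one_mul]
    rw [e1, e2] at hsum
    unfold ent
    rw [← hm]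
    linarith

lemma ent_nonneg (hν : ∀ σ, 0 ≤ ν σ) (hν1 : ∑ σ, ν σ = 1) (hf : ∀ σ, 0 ≤ f σ) :
    0 ≤ ent ν f := by
  have := gibbs (ρ := fun _ => 1) hν hν1 hf (fun _ => zero_le_one)
    (by simpa using hν1) (fun σ _ _ => one_ne_zero)
  simpa using this

/-- convexity of entropy in the function (Jensen) -/
lemma ent_jensen {X : Type*} [Fintype X] (w : X → ℝ) (F : X → (∀ p, κ p) → ℝ)
    (hw : ∀ k, 0 ≤ w k) (hw1 : ∑ k, w k = 1) (hF : ∀ k σ, 0 ≤ F k σ)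
    (hν : ∀ σ, 0 ≤ ν σ) (hν1 : ∑ σ, ν σ = 1) :
    ent ν (fun σ => ∑ k, w k * F k σ) ≤ ∑ k, w k * ent ν (F k) := by
  set G : (∀ p, κ p) → ℝ := fun σ => ∑ k, w k * F k σ with hG
  have hGnn : ∀ σ, 0 ≤ G σ := fun σ => Finset.sum_nonneg fun k _ =>
    mul_nonneg (hw k) (hF k σ)
  set m := ∑ σ, ν σ * G σ with hm
  have hm0 : 0 ≤ m := Finset.sum_nonneg fun σ _ => mul_nonneg (hν σ) (hGnn σ)
  rcases eq_or_lt_of_le hm0 with hmz | hmpos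
  · rw [ent_eq_zero_of_mean_zero hν hGnn hmz.symm]
    exact Finset.sum_nonneg fun k _ => mul_nonneg (hw k) (ent_nonneg hν hν1 (hF k))
  · set ρ : (∀ p, κ p) → ℝ := fun σ => G σ / m with hρdef
    have hρ : ∀ σ, 0 ≤ ρ σ := fun σ => div_nonneg (hGnn σ) hm0
    have hρ1 : ∑ σ, ν σ * ρ σ = 1 := by
      rw [show (∑ σ, ν σ * ρ σ) = (∑ σ, ν σ * G σ) / m by
        rw [Finset.sum_div]
        exact Finset.sum_congr rfl fun σ _ => by rw [hρdef]; ring]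
      rw [← hm, div_self hmpos.ne']
    have step1 : ent ν G = ∑ σ, ν σ * (G σ * Real.log (ρ σ)) := by
      unfold ent
      have : ∀ σ ∈ (univ : Finset (∀ p, κ p)), ν σ * (G σ * Real.log (ρ σ))
          = ν σ * (G σ * Real.log (G σ)) - ν σ * (G σ * Real.log m) := by
        intro σ _
        by_cases hG0 : G σ = 0
        · rw [hG0]; ring
        · have : Real.log (ρ σ) = Real.log (G σ) - Real.log m := by
            rw [hρdef]
            exact Real.log_div hG0 hmpos.ne'
          rw [this]; ring
      rw [Finset.sum_congr rfl this, Finset.sum_sub_distrib]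
      congr 1
      rw [show (∑ σ, ν σ * (G σ * Real.log m)) = (∑ σ, ν σ * G σ) * Real.log m by
        rw [Finset.sum_mul]
        exact Finset.sum_congr rfl fun σ _ => by ring]
    have step2 : ∑ σ, ν σ * (G σ * Real.log (ρ σ))
        = ∑ k, w k * ∑ σ, ν σ * (F k σ * Real.log (ρ σ)) := by
      have : ∀ σ ∈ (univ : Finset (∀ p, κ p)), ν σ * (G σ * Real.log (ρ σ))
          = ∑ k, w k * (ν σ * (F k σ * Real.log (ρ σ))) := by
        intro σ _
        rw [Finset.sum_mul, Finset.mul_sum]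
        exact Finset.sum_congr rfl fun k _ => by ring
      rw [Finset.sum_congr rfl this, Finset.sum_comm]
      exact Finset.sum_congr rfl fun k _ => by rw [Finset.mul_sum]
    have step3 : ∀ k ∈ (univ : Finset X), w k * ∑ σ, ν σ * (F k σ * Real.log (ρ σ))
        ≤ w k * ent ν (F k) := by
      intro k _
      rcases eq_or_lt_of_le (hw k) with hwz | hwp
      · rw [← hwz]; simp
      · refine mul_le_mul_of_nonneg_left ?_ (hw k)
        refine gibbs hν hν1 (hF k) hρ hρ1 fun σ hν0 hF0 => ?_
        have hFp : 0 < F k σ := lt_of_le_of_ne (hF k σ) (Ne.symm hF0)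
        have hGp : 0 < G σ := by
          calc (0:ℝ) < w k * F k σ := mul_pos hwp hFp
          _ ≤ G σ := Finset.single_le_sum (f := fun k => w k * F k σ)
              (fun k _ => mul_nonneg (hw k) (hF k σ)) (mem_univ k)
        rw [hρdef]
        positivity
    calc ent ν G = ∑ k, w k * ∑ σ, ν σ * (F k σ * Real.log (ρ σ)) := by
          rw [step1, step2]
    _ ≤ ∑ k, w k * ent ν (F k) := Finset.sum_le_sum step3

/-- chain rule (base form) -/
lemma chain_base (hν : ∀ σ, 0 ≤ ν σ) (hν1 : ∑ σ, ν σ = 1) :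
    ent ν f = (∑ τ, ν τ * entAD ν B f τ) + ent ν (condExpD ν B f) := by
  set g := condExpD ν B f with hg
  have e1 : ∑ τ, ν τ * entAD ν B f τ
      = (∑ σ, ν σ * (f σ * Real.log (f σ))) - ∑ τ, ν τ * (g τ * Real.log (g τ)) := by
    simp only [entAD_eq]
    unfold ent
    simp only [mul_sub]
    rw [Finset.sum_sub_distrib]
    congr 1
    exact sum_mul_condExpD (f := fun σ => f σ * Real.log (f σ)) hν
  have e2 : ∑ τ, ν τ * g τ = ∑ σ, ν σ * f σ := sum_mul_condExpD hν
  have e3 : ent ν g = (∑ τ, ν τ * (g τ * Real.log (g τ)))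
      - (∑ σ, ν σ * f σ) * Real.log (∑ σ, ν σ * f σ) := by
    unfold ent
    rw [e2]
  rw [e1, e3]
  unfold ent
  ring

lemma condExpD_nonneg (hν : ∀ σ, 0 ≤ ν σ) (hf : ∀ σ, 0 ≤ f σ) : 0 ≤ condExpD ν A f τ :=
  Finset.sum_nonneg fun σ _ => mul_nonneg (condMeasD_nonneg hν) (hf σ)

lemma fiber_empty : (∀ p ∉ (∅ : Finset ι), σ p = τ p) ↔ σ = τ :=
  ⟨fun h => funext fun p => h p (Finset.notMem_empty p),
   fun h p _ => by rw [h]⟩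

lemma condExpD_empty (hpos : ∀ σ, 0 < μ σ) : condExpD μ ∅ f = f := by
  funext τ
  have hZ : ZD μ (∅ : Finset ι) τ = μ τ := by
    unfold ZD
    rw [Finset.sum_eq_single τ]
    · rw [if_pos fun p _ => rfl]
    · intro σ' _ hne
      rw [if_neg (fun hc => hne (fiber_empty.1 hc))]
    · intro h
      exact absurd (mem_univ τ) h
  unfold condExpD
  rw [Finset.sum_eq_single τ]
  · rw [condMeasD_eq, if_pos (fun p _ => rfl), hZ, div_self (hpos τ).ne']
    ring
  · intro σ _ hne
    rw [condMeasD_eq, if_neg (fun hc => hne (fiber_empty.1 hc))]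
    simp
  · intro h
    exact absurd (mem_univ τ) h

lemma condMeasD_invariant (h : ∀ p ∉ B, τ p = τ0 p) : condMeasD μ B τ = condMeasD μ B τ0 := by
  funext σ
  rw [condMeasD_eq, condMeasD_eq, ZD_congr h,
    if_congr ((fiber_symm h σ).symm.trans (Iff.rfl)) rfl rfl]

lemma condExpD_invariant (h : ∀ p ∉ B, τ p = τ0 p) :
    condExpD μ B f τ = condExpD μ B f τ0 := by
  unfold condExpD
  rw [condMeasD_invariant h]

lemma condMeasD_ne_zero_imp (h : condMeasD μ A τ0 τ ≠ 0) : ∀ p ∉ A, τ p = τ0 p := by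
  by_contra hc
  exact h (by rw [condMeasD_eq, if_neg hc]; simp)

lemma entAD_eq_zero_of_invariant (hpos : ∀ σ, 0 < μ σ)
    (h : ∀ τ' : ∀ p, κ p, (∀ p ∉ A, τ' p = τ p) → f τ' = f τ) :
    entAD μ A f τ = 0 := by
  rw [entAD_eq]
  exact ent_eq_zero_of_const_on_supp (sum_condMeasD' hpos) (f τ)
    (fun σ hσ => h σ (condMeasD_ne_zero_imp hσ))

/-- tower property of the conditional measures -/
lemma tower_measure (hpos : ∀ σ, 0 < μ σ) (hBA : B ⊆ A) (hτ : ∀ p ∉ A, τ p = τ0 p) :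
    condMeasD (condMeasD μ A τ0) B τ = condMeasD μ B τ := by
  set ν := condMeasD μ A τ0 with hν
  have hZA : (0:ℝ) < ZD μ A τ0 := ZD_pos hpos
  have hfibA : ∀ σ : ∀ p, κ p, (∀ p ∉ B, σ p = τ p) → (∀ p ∉ A, σ p = τ0 p) := by
    intro σ hσ p hp
    exact (hσ p (fun hmem => hp (hBA hmem))).trans (hτ p hp)
  have hνval : ∀ σ : ∀ p, κ p, (∀ p ∉ B, σ p = τ p) → ν σ = μ σ / ZD μ A τ0 := by
    intro σ hσ
    rw [hν, condMeasD_eq, if_pos (hfibA σ hσ)]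
  have hZB : ZD ν B τ = ZD μ B τ / ZD μ A τ0 := by
    unfold ZD
    rw [Finset.sum_div]
    refine Finset.sum_congr rfl fun σ _ => ?_
    by_cases hfib : ∀ p ∉ B, σ p = τ p
    · rw [if_pos hfib, if_pos hfib, hνval σ hfib]
      rfl
    · rw [if_neg hfib, if_neg hfib, zero_div]
  funext σ
  rw [condMeasD_eq, condMeasD_eq, hZB]
  by_cases hfib : ∀ p ∉ B, σ p = τ p
  · rw [if_pos hfib, if_pos hfib, hνval σ hfib]
    have h1 : ZD μ A τ0 ≠ 0 := hZA.ne'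
    have h2 : ZD μ B τ ≠ 0 := (ZD_pos (A := B) (τ := τ) hpos).ne'
    field_simp
  · rw [if_neg hfib, if_neg hfib, zero_div, zero_div]

/-- the two-block chain rule -/
lemma entAD_chain (hpos : ∀ σ, 0 < μ σ) (hμ1 : ∑ σ, μ σ = 1) (hBA : B ⊆ A) :
    ∑ τ, μ τ * entAD μ A f τ
      = (∑ τ, μ τ * entAD μ B f τ) + ∑ τ, μ τ * entAD μ A (condExpD μ B f) τ := by
  have hμnn : ∀ σ, 0 ≤ μ σ := fun σ => (hpos σ).le
  have key : ∀ τ0 : ∀ p, κ p, entAD μ A f τ0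
      = condExpD μ A (entAD μ B f) τ0 + entAD μ A (condExpD μ B f) τ0 := by
    intro τ0
    set ν := condMeasD μ A τ0 with hνdef
    have hνnn : ∀ σ, 0 ≤ ν σ := fun σ => condMeasD_nonneg hμnn
    have hν1 : ∑ σ, ν σ = 1 := sum_condMeasD' hpos
    have hcb := chain_base (ν := ν) (f := f) (B := B) hνnn hν1
    have r1 : ∀ τ : ∀ p, κ p, ν τ * entAD ν B f τ = ν τ * entAD μ B f τ := by
      intro τ
      by_cases hτ : ν τ = 0
      · rw [hτ]; ring
      · have hfib := condMeasD_ne_zero_imp hτ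
        rw [entAD_eq, entAD_eq, tower_measure hpos hBA hfib]
    have r2 : ent ν (condExpD ν B f) = ent ν (condExpD μ B f) := by
      refine ent_congr fun σ hσ => ?_
      have hfib := condMeasD_ne_zero_imp hσ
      unfold condExpD
      rw [tower_measure hpos hBA hfib]
    rw [show entAD μ A f τ0 = ent ν f from entAD_eq, hcb, r2]
    have : entAD μ A (condExpD μ B f) τ0 = ent ν (condExpD μ B f) := entAD_eq
    rw [this]
    congr 1
    rw [Finset.sum_congr rfl fun τ _ => r1 τ]
    rfl
  calc ∑ τ, μ τ * entAD μ A f τ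
      = ∑ τ, (μ τ * condExpD μ A (entAD μ B f) τ + μ τ * entAD μ A (condExpD μ B f) τ) := by
        refine Finset.sum_congr rfl fun τ _ => ?_
        rw [key τ]; ring
    _ = (∑ τ, μ τ * condExpD μ A (entAD μ B f) τ) + ∑ τ, μ τ * entAD μ A (condExpD μ B f) τ := by
        rw [Finset.sum_add_distrib]
    _ = (∑ τ, μ τ * entAD μ B f τ) + ∑ τ, μ τ * entAD μ A (condExpD μ B f) τ := by
        rw [sum_mul_condExpD hμnn]

/-- tower property of conditional expectations -/
lemma condExpD_tower (hpos : ∀ σ, 0 < μ σ) (hBA : B ⊆ A) :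
    condExpD μ A (condExpD μ B f) = condExpD μ A f := by
  have hμnn : ∀ σ, 0 ≤ μ σ := fun σ => (hpos σ).le
  funext τ
  set ν := condMeasD μ A τ with hνdef
  have hνnn : ∀ σ, 0 ≤ ν σ := fun σ => condMeasD_nonneg hμnn
  calc condExpD μ A (condExpD μ B f) τ = ∑ σ, ν σ * condExpD μ B f σ := rfl
    _ = ∑ σ, ν σ * condExpD ν B f σ := by
        refine Finset.sum_congr rfl fun σ _ => ?_
        by_cases hσ : ν σ = 0
        · rw [hσ]; ring
        · have hfib := condMeasD_ne_zero_imp hσ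
          unfold condExpD
          rw [tower_measure hpos hBA hfib]
    _ = ∑ σ, ν σ * f σ := sum_mul_condExpD hνnn
    _ = condExpD μ A f τ := rfl

lemma entAD_nonneg (hpos : ∀ σ, 0 < μ σ) (hf : ∀ σ, 0 ≤ f σ) : 0 ≤ entAD μ A f τ := by
  rw [entAD_eq]
  exact ent_nonneg (fun σ => condMeasD_nonneg fun σ' => (hpos σ').le) (sum_condMeasD' hpos) hf

lemma sum_entAD_nonneg (hpos : ∀ σ, 0 < μ σ) (hf : ∀ σ, 0 ≤ f σ) :
    0 ≤ ∑ τ, μ τ * entAD μ A f τ :=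
  Finset.sum_nonneg fun τ _ => mul_nonneg (hpos τ).le (entAD_nonneg hpos hf)

/-- monotonicity of averaged conditional entropy in the block -/
lemma entAD_mono (hpos : ∀ σ, 0 < μ σ) (hμ1 : ∑ σ, μ σ = 1) (hBA : B ⊆ A)
    (hf : ∀ σ, 0 ≤ f σ) :
    ∑ τ, μ τ * entAD μ B f τ ≤ ∑ τ, μ τ * entAD μ A f τ := by
  rw [entAD_chain (f := f) hpos hμ1 hBA]
  have : 0 ≤ ∑ τ, μ τ * entAD μ A (condExpD μ B f) τ :=
    sum_entAD_nonneg hpos fun σ =>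
      condExpD_nonneg (fun σ' => (hpos σ').le) hf
  linarith

/-- reindexing sums and entropies through an injection covering the support -/
lemma sum_reindex {X : Type*} [Fintype X] {e : X → ∀ p, κ p} (he : Function.Injective e)
    (hsupp : ∀ σ, ν σ ≠ 0 → ∃ x, e x = σ) (G : (∀ p, κ p) → ℝ) :
    ∑ σ, ν σ * G σ = ∑ x, ν (e x) * G (e x) := by
  have himg : ∑ x : X, ν (e x) * G (e x) = ∑ σ ∈ Finset.image e univ, ν σ * G σ := by
    rw [Finset.sum_image (g := e) (f := fun σ => ν σ * G σ) (fun x _ y _ h => he h)]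
  rw [himg]
  refine (Finset.sum_subset (Finset.subset_univ _) fun σ _ hσ => ?_).symm
  by_cases hν : ν σ = 0
  · rw [hν]; ring
  · obtain ⟨x, hx⟩ := hsupp σ hν
    exact absurd (Finset.mem_image.2 ⟨x, mem_univ x, hx⟩) hσ

lemma ent_reindex {X : Type*} [Fintype X] {e : X → ∀ p, κ p} (he : Function.Injective e)
    (hsupp : ∀ σ, ν σ ≠ 0 → ∃ x, e x = σ) (G : (∀ p, κ p) → ℝ) :
    ent ν G = ent (fun x => ν (e x)) (fun x => G (e x)) := by
  unfold ent
  rw [sum_reindex he hsupp (fun σ => G σ * Real.log (G σ)), sum_reindex he hsupp G]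

lemma ZD_empty : ZD μ (∅ : Finset ι) τ = μ τ := by
  unfold ZD
  rw [Finset.sum_eq_single τ]
  · rw [if_pos fun p _ => rfl]
  · intro σ' _ hne
    rw [if_neg (fun hc => hne (fiber_empty.1 hc))]
  · intro h
    exact absurd (mem_univ τ) h

lemma ZD_univ : ZD μ (univ : Finset ι) τ = ∑ σ, μ σ :=
  Finset.sum_congr rfl fun σ _ => if_pos fun p hp => absurd (mem_univ p) hp

lemma condMeasD_univ (hμ1 : ∑ σ, μ σ = 1) : condMeasD μ (univ : Finset ι) τ = μ := by
  funext σ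
  rw [condMeasD_eq, if_pos (fun p hp => absurd (mem_univ p) hp), ZD_univ, hμ1, div_one]

lemma entAD_univ (hμ1 : ∑ σ, μ σ = 1) : entAD μ (univ : Finset ι) f τ = ent μ f := by
  rw [entAD_eq, condMeasD_univ hμ1]

/-- a product of ifs with zero else-branches -/
lemma prod_ite_zero {J : Type*} [Fintype J] (P : J → Prop) [DecidablePred P]
    [Decidable (∀ j, P j)] (a : J → ℝ) :
    (∏ j, if P j then a j else 0) = if (∀ j, P j) then ∏ j, a j else 0 := by
  by_cases h : ∀ j, P j
  · rw [if_pos h]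
    exact Finset.prod_congr rfl fun j _ => if_pos (h j)
  · rw [if_neg h]
    push_neg at h
    obtain ⟨j, hj⟩ := h
    exact Finset.prod_eq_zero (f := fun j => if P j then a j else 0) (mem_univ j) (if_neg hj)

/-- sum of products over a pi type factorizes -/
lemma sum_prod_pi {J : Type*} [Fintype J] [DecidableEq J] {κ' : J → Type*} [∀ j, Fintype (κ' j)]
    (g : ∀ j, κ' j → ℝ) :
    ∑ y : ∀ j, κ' j, ∏ j, g j (y j) = ∏ j, ∑ x, g j x := by
  rw [Finset.prod_univ_sum]
  rw [Fintype.piFinset_univ]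

lemma gamD_eq (α : Finset ι → ℝ) :
    gamD α = ⨅ p : ι, ∑ A ∈ univ.filter (fun A => p ∈ A), α A := by
  unfold gamD
  congr 1
  funext p
  congr 1
  exact Finset.filter_congr_decidable _ _ _

lemma gamD_le (α : Finset ι → ℝ) (P : ι) :
    gamD α ≤ ∑ A ∈ univ.filter (fun A => P ∈ A), α A := by
  rw [gamD_eq]
  exact ciInf_le (Set.Finite.bddBelow (Set.finite_range _)) P

lemma le_gamD [Nonempty ι] {c : ℝ} (α : Finset ι → ℝ)
    (h : ∀ P : ι, c ≤ ∑ A ∈ univ.filter (fun A => P ∈ A), α A) : c ≤ gamD α := by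
  rw [gamD_eq]
  exact le_ciInf h

lemma gamD_nonneg [Nonempty ι] (α : Finset ι → ℝ) (hα : ∀ A, 0 ≤ α A) : 0 ≤ gamD α :=
  le_gamD α fun P => Finset.sum_nonneg fun A _ => hα A

/-- entropy of an indicator is positive -/
lemma ent_indicator {X : Type*} [Fintype X] [DecidableEq X] {ν : X → ℝ}
    (hν : ∀ x, 0 < ν x) (hν1 : ∑ x, ν x = 1) {x0 x1 : X} (hne : x0 ≠ x1) :
    0 < ent ν (fun x => if x = x0 then (1:ℝ) else 0) := by
  set g : X → ℝ := fun x => if x = x0 then (1:ℝ) else 0 with hg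
  have e1 : ∑ x, ν x * (g x * Real.log (g x)) = 0 := by
    refine Finset.sum_eq_zero fun x _ => ?_
    rw [hg]
    by_cases hx : x = x0
    · simp [hx]
    · simp [hx]
  have e2 : ∑ x, ν x * g x = ν x0 := by
    rw [hg]
    rw [Finset.sum_congr rfl fun x _ => (by split <;> simp_all :
      ν x * (if x = x0 then (1:ℝ) else 0) = if x = x0 then ν x else 0)]
    exact (Finset.sum_ite_eq' univ x0 ν).trans (if_pos (mem_univ x0))
  have hm0 : 0 < ν x0 := hν x0
  have hm1 : ν x0 < 1 := by
    have hle : ν x0 + ν x1 ≤ ∑ x, ν x := by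
      rw [← Finset.sum_pair hne]
      exact Finset.sum_le_sum_of_subset_of_nonneg (Finset.subset_univ _)
        (fun x _ _ => (hν x).le)
    rw [hν1] at hle
    have := hν x1
    linarith
  have : ent ν g = -(ν x0 * Real.log (ν x0)) := by
    unfold ent
    rw [e1, e2]
    ring
  rw [this]
  have hlog : Real.log (ν x0) < 0 := Real.log_neg hm0 hm1
  nlinarith

end General

section Product

variable {n : ℕ} {L : Fin n → ℕ} {q : Fin n → ℕ}

/-- curried configuration space -/
def uncur (y : ∀ i : Fin n, Fin (L i) → Fin (q i)) :
    ∀ p : (i : Fin n) × Fin (L i), Fin (q p.1) := fun p => y p.1 p.2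

def blkT (σ : ∀ p : (i : Fin n) × Fin (L i), Fin (q p.1)) :
    ∀ i : Fin n, Fin (L i) → Fin (q i) := fun i ℓ => σ ⟨i, ℓ⟩

lemma uncur_blkT (σ : ∀ p : (i : Fin n) × Fin (L i), Fin (q p.1)) : uncur (blkT σ) = σ :=
  funext fun p => by cases p; rfl

def curryE : (∀ i : Fin n, Fin (L i) → Fin (q i)) ≃ (∀ p : (i : Fin n) × Fin (L i), Fin (q p.1)) where
  toFun := uncur
  invFun := blkT
  left_inv := fun y => rfl
  right_inv := uncur_blkT

lemma sumS_eq_sumT (F : (∀ p : (i : Fin n) × Fin (L i), Fin (q p.1)) → ℝ) :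
    ∑ σ, F σ = ∑ y : ∀ i : Fin n, Fin (L i) → Fin (q i), F (uncur y) :=
  (Fintype.sum_equiv curryE _ F fun y => rfl).symm

/-- override block i -/
def ov (τ : ∀ p : (i : Fin n) × Fin (L i), Fin (q p.1)) (i : Fin n)
    (x : Fin (L i) → Fin (q i)) : ∀ p : (i : Fin n) × Fin (L i), Fin (q p.1) :=
  uncur (Function.update (blkT τ) i x)

def emb (i : Fin n) (U : Finset (Fin (L i))) : Finset ((i : Fin n) × Fin (L i)) :=
  U.image fun ℓ => ⟨i, ℓ⟩

def Vb (i : Fin n) : Finset ((i : Fin n) × Fin (L i)) := emb i Finset.univ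

def VbU (K : Finset (Fin n)) : Finset ((i : Fin n) × Fin (L i)) :=
  univ.filter fun p => p.1 ∈ K

def pull (i : Fin n) (A : Finset ((i : Fin n) × Fin (L i))) : Finset (Fin (L i)) :=
  univ.filter fun ℓ => (⟨i, ℓ⟩ : (i : Fin n) × Fin (L i)) ∈ A

lemma mem_pull {i : Fin n} {A : Finset ((i : Fin n) × Fin (L i))} {ℓ : Fin (L i)} :
    ℓ ∈ pull i A ↔ (⟨i, ℓ⟩ : (i : Fin n) × Fin (L i)) ∈ A := by
  simp [pull]

lemma mk_mem_emb {i : Fin n} {U : Finset (Fin (L i))} {ℓ : Fin (L i)} :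
    (⟨i, ℓ⟩ : (i : Fin n) × Fin (L i)) ∈ emb i U ↔ ℓ ∈ U := by
  constructor
  · intro h
    obtain ⟨ℓ', hℓ', he⟩ := Finset.mem_image.1 h
    cases sigma_mk_injective he
    exact hℓ'
  · intro h
    exact Finset.mem_image.2 ⟨ℓ, h, rfl⟩

lemma mk_mem_emb_ne {i j : Fin n} (hj : j ≠ i) {U : Finset (Fin (L i))} {ℓ : Fin (L j)} :
    (⟨j, ℓ⟩ : (i : Fin n) × Fin (L i)) ∉ emb i U := by
  intro h
  obtain ⟨ℓ', _, he⟩ := Finset.mem_image.1 h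
  exact hj (congrArg Sigma.fst he).symm

lemma pull_emb_self {i : Fin n} (U : Finset (Fin (L i))) : pull i (emb i U) = U := by
  ext ℓ
  rw [mem_pull, mk_mem_emb]

lemma pull_emb_ne {i j : Fin n} (hj : j ≠ i) (U : Finset (Fin (L i))) :
    pull j (emb i U) = ∅ := by
  ext ℓ
  simp only [mem_pull, Finset.notMem_empty, iff_false]
  exact mk_mem_emb_ne hj

lemma mem_VbU {K : Finset (Fin n)} {p : (i : Fin n) × Fin (L i)} :
    p ∈ VbU K ↔ p.1 ∈ K := by simp [VbU]

lemma mk_mem_Vb {i j : Fin n} {ℓ : Fin (L j)} :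
    (⟨j, ℓ⟩ : (i : Fin n) × Fin (L i)) ∈ Vb i ↔ j = i := by
  constructor
  · intro h
    by_contra hne
    exact mk_mem_emb_ne hne h
  · rintro rfl
    exact mk_mem_emb.2 (mem_univ ℓ)

lemma pull_Vb_self (i : Fin n) : pull i (Vb (L := L) i) = (univ : Finset (Fin (L i))) :=
  pull_emb_self univ

lemma pull_VbU_mem {j : Fin n} {K : Finset (Fin n)} (h : j ∈ K) :
    pull j (VbU (L := L) K) = (univ : Finset (Fin (L j))) := by
  ext ℓ
  simp only [mem_pull, mem_VbU, Finset.mem_univ, iff_true]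
  exact h

lemma pull_VbU_notMem {j : Fin n} {K : Finset (Fin n)} (h : j ∉ K) :
    pull j (VbU (L := L) K) = (∅ : Finset (Fin (L j))) := by
  ext ℓ
  simp only [mem_pull, mem_VbU, Finset.notMem_empty, iff_false]
  exact h

lemma VbU_empty : VbU (∅ : Finset (Fin n)) = (∅ : Finset ((i : Fin n) × Fin (L i))) := by
  ext p; simp [mem_VbU]

lemma VbU_univ : VbU (univ : Finset (Fin n)) = (univ : Finset ((i : Fin n) × Fin (L i))) := by
  ext p; simp [mem_VbU]

lemma VbU_mono {K K' : Finset (Fin n)} (h : K ⊆ K') : VbU (L := L) K ⊆ VbU K' :=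
  fun p hp => mem_VbU.2 (h (mem_VbU.1 hp))

lemma Vb_subset_VbU {i : Fin n} {K : Finset (Fin n)} (h : i ∈ K) :
    Vb (L := L) i ⊆ VbU K := by
  rintro ⟨j, ℓ⟩ hp
  rw [mk_mem_Vb] at hp
  subst hp
  exact mem_VbU.2 h

lemma inter_Vb_eq_emb_pull {A : Finset ((i : Fin n) × Fin (L i))} {i : Fin n} :
    A ∩ Vb i = emb i (pull i A) := by
  ext p
  rcases p with ⟨j, ℓ⟩
  rw [Finset.mem_inter, mk_mem_Vb]
  by_cases hj : j = i
  · subst hj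
    rw [mk_mem_emb, mem_pull]
    simp
  · simp only [hj, and_false, false_iff]
    exact mk_mem_emb_ne hj

lemma blkT_ov_self (τ : ∀ p : (i : Fin n) × Fin (L i), Fin (q p.1)) (i : Fin n)
    (x : Fin (L i) → Fin (q i)) : blkT (ov τ i x) i = x :=
  Function.update_self (β := fun i => Fin (L i) → Fin (q i)) i x (blkT τ)

lemma blkT_ov_ne {τ : ∀ p : (i : Fin n) × Fin (L i), Fin (q p.1)} {i j : Fin n} (hj : j ≠ i)
    (x : Fin (L i) → Fin (q i)) : blkT (ov τ i x) j = blkT τ j :=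
  Function.update_of_ne (β := fun i => Fin (L i) → Fin (q i)) hj x (blkT τ)

lemma ov_apply_ne {τ : ∀ p : (i : Fin n) × Fin (L i), Fin (q p.1)} {i : Fin n}
    {x : Fin (L i) → Fin (q i)} {p : (i : Fin n) × Fin (L i)} (hp : p.1 ≠ i) :
    ov τ i x p = τ p := by
  rcases p with ⟨j, ℓ⟩
  exact congrFun (blkT_ov_ne (τ := τ) hp x) ℓ

lemma ov_apply_mk {τ : ∀ p : (i : Fin n) × Fin (L i), Fin (q p.1)} {i : Fin n}
    {x : Fin (L i) → Fin (q i)} {ℓ : Fin (L i)} :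
    ov τ i x ⟨i, ℓ⟩ = x ℓ :=
  congrFun (blkT_ov_self τ i x) ℓ

lemma ov_ov {τ : ∀ p : (i : Fin n) × Fin (L i), Fin (q p.1)} {i : Fin n}
    (x x' : Fin (L i) → Fin (q i)) : ov (ov τ i x) i x' = ov τ i x' :=
  congrArg uncur
    (Function.update_idem (β := fun i => Fin (L i) → Fin (q i)) x x' (blkT τ))

lemma ov_comm {τ : ∀ p : (i : Fin n) × Fin (L i), Fin (q p.1)} {i j : Fin n} (hij : i ≠ j)
    (x : Fin (L i) → Fin (q i)) (x' : Fin (L j) → Fin (q j)) :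
    ov (ov τ i x) j x' = ov (ov τ j x') i x :=
  congrArg uncur
    (Function.update_comm (β := fun i => Fin (L i) → Fin (q i)) hij x x' (blkT τ))

lemma ov_inj (τ : ∀ p : (i : Fin n) × Fin (L i), Fin (q p.1)) (i : Fin n) :
    Function.Injective (ov τ i) := by
  intro x y h
  have h2 := congrArg (fun σ => blkT σ i) h
  simpa only [blkT_ov_self] using h2

lemma eq_ov_of_fiber {τ σ : ∀ p : (i : Fin n) × Fin (L i), Fin (q p.1)} {i : Fin n}
    {U : Finset (Fin (L i))} (h : ∀ p ∉ emb i U, σ p = τ p) :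
    σ = ov τ i (blkT σ i) := by
  funext p
  rcases p with ⟨j, ℓ⟩
  by_cases hj : j = i
  · subst hj
    rw [ov_apply_mk]
    rfl
  · rw [ov_apply_ne hj]
    exact h ⟨j, ℓ⟩ (mk_mem_emb_ne hj)

/-- the product measure -/
def Pμ (μi : ∀ i : Fin n, (Fin (L i) → Fin (q i)) → ℝ) :
    (∀ p : (i : Fin n) × Fin (L i), Fin (q p.1)) → ℝ :=
  fun σ => ∏ i, μi i fun ℓ => σ ⟨i, ℓ⟩

variable {μi : ∀ i : Fin n, (Fin (L i) → Fin (q i)) → ℝ}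

lemma Pμ_apply (σ : ∀ p : (i : Fin n) × Fin (L i), Fin (q p.1)) :
    Pμ μi σ = ∏ i, μi i (blkT σ i) := rfl

lemma Pμ_uncur (y : ∀ i : Fin n, Fin (L i) → Fin (q i)) :
    Pμ μi (uncur y) = ∏ i, μi i (y i) := rfl

lemma Pμ_pos (hpos : ∀ i x, 0 < μi i x) (σ : ∀ p : (i : Fin n) × Fin (L i), Fin (q p.1)) :
    0 < Pμ μi σ :=
  Finset.prod_pos fun i _ => hpos i _

lemma sum_Pμ (h1 : ∀ i, ∑ x, μi i x = 1) : ∑ σ, Pμ μi σ = 1 := by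
  rw [sumS_eq_sumT (Pμ μi)]
  calc ∑ y : ∀ i : Fin n, Fin (L i) → Fin (q i), Pμ μi (uncur y)
      = ∑ y : ∀ i : Fin n, Fin (L i) → Fin (q i), ∏ i, μi i (y i) :=
        Finset.sum_congr rfl fun y _ => Pμ_uncur y
    _ = ∏ i, ∑ x, μi i x := sum_prod_pi fun i x => μi i x
    _ = 1 := Finset.prod_eq_one fun i _ => h1 i

lemma fiber_iff {A : Finset ((i : Fin n) × Fin (L i))}
    {σ τ : ∀ p : (i : Fin n) × Fin (L i), Fin (q p.1)} :
    (∀ p ∉ A, σ p = τ p) ↔ ∀ i : Fin n, ∀ ℓ ∉ pull i A, σ ⟨i, ℓ⟩ = τ ⟨i, ℓ⟩ := by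
  constructor
  · intro h i ℓ hℓ
    exact h ⟨i, ℓ⟩ fun hc => hℓ (mem_pull.2 hc)
  · rintro h ⟨i, ℓ⟩ hp
    exact h i ℓ fun hc => hp (mem_pull.1 hc)

lemma ZD_prod {A : Finset ((i : Fin n) × Fin (L i))}
    {τ : ∀ p : (i : Fin n) × Fin (L i), Fin (q p.1)} :
    ZD (Pμ μi) A τ = ∏ i, ZD (μi i) (pull i A) (blkT τ i) := by
  have e1 : ∀ y : ∀ i : Fin n, Fin (L i) → Fin (q i),
      (if ∀ p ∉ A, uncur y p = τ p then Pμ μi (uncur y) else 0)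
      = ∏ j, (if ∀ ℓ ∉ pull j A, y j ℓ = blkT τ j ℓ then μi j (y j) else 0) := by
    intro y
    by_cases hC : ∀ p ∉ A, uncur y p = τ p
    · have h2 : ∀ j, ∀ ℓ ∉ pull j A, y j ℓ = blkT τ j ℓ := fun j => fiber_iff.1 hC j
      calc (if ∀ p ∉ A, uncur y p = τ p then Pμ μi (uncur y) else 0)
          = Pμ μi (uncur y) := if_pos hC
        _ = ∏ j, μi j (y j) := Pμ_uncur y
        _ = ∏ j, (if ∀ ℓ ∉ pull j A, y j ℓ = blkT τ j ℓ then μi j (y j) else 0) :=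
            Finset.prod_congr rfl fun j _ => (if_pos (h2 j)).symm
    · have h2 : ¬ ∀ j, ∀ ℓ ∉ pull j A, y j ℓ = blkT τ j ℓ :=
        fun hc => hC (fiber_iff.2 hc)
      obtain ⟨j, hj⟩ := not_forall.1 h2
      calc (if ∀ p ∉ A, uncur y p = τ p then Pμ μi (uncur y) else 0)
          = 0 := if_neg hC
        _ = ∏ j, (if ∀ ℓ ∉ pull j A, y j ℓ = blkT τ j ℓ then μi j (y j) else 0) :=
            (Finset.prod_eq_zero
              (f := fun j => if ∀ ℓ ∉ pull j A, y j ℓ = blkT τ j ℓ then μi j (y j) else 0)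
              (mem_univ j) (if_neg hj)).symm
  calc ZD (Pμ μi) A τ
      = ∑ σ, (if ∀ p ∉ A, σ p = τ p then Pμ μi σ else 0) := ZD_def _ _ _
    _ = ∑ y : ∀ i : Fin n, Fin (L i) → Fin (q i),
          (if ∀ p ∉ A, uncur y p = τ p then Pμ μi (uncur y) else 0) :=
        sumS_eq_sumT fun σ => if ∀ p ∉ A, σ p = τ p then Pμ μi σ else 0
    _ = ∑ y : ∀ i : Fin n, Fin (L i) → Fin (q i),
          ∏ j, (if ∀ ℓ ∉ pull j A, y j ℓ = blkT τ j ℓ then μi j (y j) else 0) :=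
        Finset.sum_congr rfl fun y _ => e1 y
    _ = ∏ j, ∑ x, (if ∀ ℓ ∉ pull j A, x ℓ = blkT τ j ℓ then μi j x else 0) :=
        sum_prod_pi fun j x => if ∀ ℓ ∉ pull j A, x ℓ = blkT τ j ℓ then μi j x else 0
    _ = ∏ j, ZD (μi j) (pull j A) (blkT τ j) :=
        Finset.prod_congr rfl fun j _ =>
          (Finset.sum_congr rfl fun x _ => ite_inst _ _).trans (ZD_def _ _ _).symm

lemma condMeasD_prod {A : Finset ((i : Fin n) × Fin (L i))}
    {τ σ : ∀ p : (i : Fin n) × Fin (L i), Fin (q p.1)} :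
    condMeasD (Pμ μi) A τ σ = if (∀ p ∉ A, σ p = τ p)
      then ∏ i, (μi i (blkT σ i) / ZD (μi i) (pull i A) (blkT τ i)) else 0 := by
  rw [condMeasD_eq, ZD_prod]
  by_cases h : ∀ p ∉ A, σ p = τ p
  · rw [if_pos h, if_pos h, Pμ_apply, Finset.prod_div_distrib]
  · rw [if_neg h, if_neg h, zero_div]

lemma fiber_ov_emb {i : Fin n} {U : Finset (Fin (L i))}
    {τ : ∀ p : (i : Fin n) × Fin (L i), Fin (q p.1)} {x : Fin (L i) → Fin (q i)} :
    (∀ p ∉ emb i U, ov τ i x p = τ p) ↔ ∀ ℓ ∉ U, x ℓ = blkT τ i ℓ := by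
  constructor
  · intro h ℓ hℓ
    have := h ⟨i, ℓ⟩ (fun hc => hℓ (mk_mem_emb.1 hc))
    rw [ov_apply_mk] at this
    exact this
  · rintro h ⟨j, ℓ⟩ hp
    by_cases hj : j = i
    · subst hj
      rw [ov_apply_mk]
      exact h ℓ fun hc => hp (mk_mem_emb.2 hc)
    · exact ov_apply_ne hj

lemma cm_ov_emb (hpos : ∀ i x, 0 < μi i x) {i : Fin n} {U : Finset (Fin (L i))}
    {τ : ∀ p : (i : Fin n) × Fin (L i), Fin (q p.1)} {x : Fin (L i) → Fin (q i)} :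
    condMeasD (Pμ μi) (emb i U) τ (ov τ i x) = condMeasD (μi i) U (blkT τ i) x := by
  rw [condMeasD_prod, condMeasD_eq]
  by_cases hc : ∀ ℓ ∉ U, x ℓ = blkT τ i ℓ
  · rw [if_pos (fiber_ov_emb.2 hc), if_pos hc]
    have hprod : (∏ j, (μi j (blkT (ov τ i x) j) / ZD (μi j) (pull j (emb i U)) (blkT τ j)))
        = μi i x / ZD (μi i) U (blkT τ i) := by
      rw [Fintype.prod_eq_single i (fun j hj => ?_)]
      · rw [blkT_ov_self, pull_emb_self]
      · rw [blkT_ov_ne hj, pull_emb_ne hj, ZD_empty]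
        exact div_self (hpos j (blkT τ j)).ne'
    rw [hprod]
  · rw [if_neg (fun hcc => hc (fiber_ov_emb.1 hcc)), if_neg hc, zero_div]

lemma supp_emb {i : Fin n} {U : Finset (Fin (L i))}
    {τ σ : ∀ p : (i : Fin n) × Fin (L i), Fin (q p.1)}
    (h : condMeasD (Pμ μi) (emb i U) τ σ ≠ 0) : ∃ x, ov τ i x = σ :=
  ⟨blkT σ i, (eq_ov_of_fiber (condMeasD_ne_zero_imp h)).symm⟩

/-- transport of conditional entropies inside one block -/
lemma entAD_emb (hpos : ∀ i x, 0 < μi i x) {i : Fin n} {U : Finset (Fin (L i))}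
    (h : (∀ p : (i : Fin n) × Fin (L i), Fin (q p.1)) → ℝ)
    (τ : ∀ p : (i : Fin n) × Fin (L i), Fin (q p.1)) :
    entAD (Pμ μi) (emb i U) h τ = entAD (μi i) U (fun x => h (ov τ i x)) (blkT τ i) := by
  rw [entAD_eq, entAD_eq, ent_reindex (ov_inj τ i) (fun σ hσ => supp_emb hσ) h]
  have e : (fun x => condMeasD (Pμ μi) (emb i U) τ (ov τ i x))
      = condMeasD (μi i) U (blkT τ i) := funext fun x => cm_ov_emb hpos
  rw [e]

lemma entAD_Vb (hpos : ∀ i x, 0 < μi i x) (h1 : ∀ i, ∑ x, μi i x = 1) {i : Fin n}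
    (h : (∀ p : (i : Fin n) × Fin (L i), Fin (q p.1)) → ℝ)
    (τ : ∀ p : (i : Fin n) × Fin (L i), Fin (q p.1)) :
    entAD (Pμ μi) (Vb i) h τ = ent (μi i) (fun x => h (ov τ i x)) :=
  (entAD_emb hpos (U := univ) h τ).trans (entAD_univ (h1 i))

lemma condExpD_Vb (hpos : ∀ i x, 0 < μi i x) (h1 : ∀ i, ∑ x, μi i x = 1) {i : Fin n}
    (h : (∀ p : (i : Fin n) × Fin (L i), Fin (q p.1)) → ℝ)
    (τ : ∀ p : (i : Fin n) × Fin (L i), Fin (q p.1)) :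
    condExpD (Pμ μi) (Vb i) h τ = ∑ x, μi i x * h (ov τ i x) := by
  calc condExpD (Pμ μi) (Vb i) h τ
      = ∑ x, condMeasD (Pμ μi) (emb i univ) τ (ov τ i x) * h (ov τ i x) :=
        sum_reindex (ν := condMeasD (Pμ μi) (emb i univ) τ) (ov_inj τ i)
          (fun σ hσ => supp_emb hσ) h
    _ = ∑ x, μi i x * h (ov τ i x) := by
        refine Finset.sum_congr rfl fun x _ => ?_
        exact congrArg (fun t => t * h (ov τ i x))
          ((cm_ov_emb hpos).trans (congrFun (condMeasD_univ (h1 i)) x))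

lemma resample (hpos : ∀ i x, 0 < μi i x) (h1 : ∀ i, ∑ x, μi i x = 1) {i : Fin n}
    (G : (∀ p : (i : Fin n) × Fin (L i), Fin (q p.1)) → ℝ) :
    ∑ τ, Pμ μi τ * (∑ x, μi i x * G (ov τ i x)) = ∑ τ, Pμ μi τ * G τ := by
  calc ∑ τ, Pμ μi τ * (∑ x, μi i x * G (ov τ i x))
      = ∑ τ, Pμ μi τ * condExpD (Pμ μi) (Vb i) G τ :=
        Finset.sum_congr rfl fun τ _ => by rw [condExpD_Vb hpos h1 G τ]
    _ = ∑ τ, Pμ μi τ * G τ := sum_mul_condExpD fun σ => (Pμ_pos hpos σ).le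

/-! ### independence of functions from blocks -/

def IndepOn (K : Finset (Fin n)) (h : (∀ p : (i : Fin n) × Fin (L i), Fin (q p.1)) → ℝ) : Prop :=
  ∀ i ∈ K, ∀ τ x, h (ov τ i x) = h τ

lemma indepOn_mono {K' K : Finset (Fin n)} (hsub : K' ⊆ K)
    {h : (∀ p : (i : Fin n) × Fin (L i), Fin (q p.1)) → ℝ} (H : IndepOn K h) : IndepOn K' h :=
  fun i hi => H i (hsub hi)

lemma indepOn_const_on {h : (∀ p : (i : Fin n) × Fin (L i), Fin (q p.1)) → ℝ} :
    ∀ K : Finset (Fin n), IndepOn K h →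
      ∀ τ τ' : ∀ p : (i : Fin n) × Fin (L i), Fin (q p.1),
        (∀ p ∉ VbU K, τ' p = τ p) → h τ' = h τ := by
  intro K
  induction K using Finset.induction_on with
  | empty =>
    intro _ τ τ' hag
    have : τ' = τ := funext fun p => hag p (by rw [VbU_empty]; exact Finset.notMem_empty p)
    rw [this]
  | @insert i K hiK ih =>
    intro hI τ τ' hag
    have h1 : h τ' = h (ov τ' i (blkT τ i)) := (hI i (mem_insert_self i K) τ' (blkT τ i)).symm
    have h2 : h (ov τ' i (blkT τ i)) = h τ := by
      refine ih (indepOn_mono (Finset.subset_insert i K) hI) τ (ov τ' i (blkT τ i)) ?_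
      rintro ⟨j, ℓ⟩ hp
      rw [mem_VbU] at hp
      by_cases hj : j = i
      · subst hj
        rw [ov_apply_mk]
        rfl
      · rw [ov_apply_ne hj]
        refine hag ⟨j, ℓ⟩ ?_
        rw [mem_VbU]
        simp only [Finset.mem_insert]
        rintro (rfl | hc)
        · exact hj rfl
        · exact hp hc
    exact h1.trans h2

lemma indepOn_condExpD_VbU {μ : (∀ p : (i : Fin n) × Fin (L i), Fin (q p.1)) → ℝ}
    {K : Finset (Fin n)} {f : (∀ p : (i : Fin n) × Fin (L i), Fin (q p.1)) → ℝ} :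
    IndepOn K (condExpD μ (VbU K) f) := by
  intro i hi τ x
  refine condExpD_invariant fun p hp => ov_apply_ne fun hc => ?_
  rw [mem_VbU] at hp
  exact hp (hc.symm ▸ hi)

variable {μi : ∀ i : Fin n, (Fin (L i) → Fin (q i)) → ℝ}

lemma indepOn_condExpD_Vb (hpos : ∀ i x, 0 < μi i x) (h1 : ∀ i, ∑ x, μi i x = 1)
    {i : Fin n} {K : Finset (Fin n)} (hiK : i ∉ K)
    {h : (∀ p : (i : Fin n) × Fin (L i), Fin (q p.1)) → ℝ} (hI : IndepOn K h) :
    IndepOn (insert i K) (condExpD (Pμ μi) (Vb i) h) := by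
  intro j hj τ x
  rcases Finset.mem_insert.1 hj with rfl | hjK
  · refine condExpD_invariant fun p hp => ?_
    rcases p with ⟨j', ℓ⟩
    refine ov_apply_ne fun hc : j' = j => ?_
    subst hc
    exact hp (mk_mem_Vb.2 rfl)
  · have hji : j ≠ i := fun e => hiK (e ▸ hjK)
    rw [condExpD_Vb hpos h1, condExpD_Vb hpos h1]
    refine Finset.sum_congr rfl fun x' _ => ?_
    rw [ov_comm hji x x', hI j hjK (ov τ i x') x]

lemma entAD_zero_of_indep (hpos : ∀ i x, 0 < μi i x) {K : Finset (Fin n)}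
    {h : (∀ p : (i : Fin n) × Fin (L i), Fin (q p.1)) → ℝ} (hI : IndepOn K h)
    (τ : ∀ p : (i : Fin n) × Fin (L i), Fin (q p.1)) :
    entAD (Pμ μi) (VbU K) h τ = 0 :=
  entAD_eq_zero_of_invariant (Pμ_pos hpos)
    (fun τ' hτ' => indepOn_const_on K hI τ τ' hτ')

/-! ### multi-block overrides -/

def ovP (K : Finset (Fin n)) (τ : ∀ p : (i : Fin n) × Fin (L i), Fin (q p.1))
    (z : ∀ j : {j : Fin n // j ∈ K}, Fin (L j.1) → Fin (q j.1)) :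
    ∀ p : (i : Fin n) × Fin (L i), Fin (q p.1) :=
  fun p => if h : p.1 ∈ K then z ⟨p.1, h⟩ p.2 else τ p

lemma ovP_apply_mem {K : Finset (Fin n)} {τ : ∀ p : (i : Fin n) × Fin (L i), Fin (q p.1)}
    {z : ∀ j : {j : Fin n // j ∈ K}, Fin (L j.1) → Fin (q j.1)}
    {p : (i : Fin n) × Fin (L i)} (h : p.1 ∈ K) :
    ovP K τ z p = z ⟨p.1, h⟩ p.2 := dif_pos h

lemma ovP_apply_not {K : Finset (Fin n)} {τ : ∀ p : (i : Fin n) × Fin (L i), Fin (q p.1)}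
    {z : ∀ j : {j : Fin n // j ∈ K}, Fin (L j.1) → Fin (q j.1)}
    {p : (i : Fin n) × Fin (L i)} (h : p.1 ∉ K) :
    ovP K τ z p = τ p := dif_neg h

lemma ovP_inj (K : Finset (Fin n)) (τ : ∀ p : (i : Fin n) × Fin (L i), Fin (q p.1)) :
    Function.Injective (ovP K τ) := by
  intro z z' he
  funext j ℓ
  have h2 := congrFun he ⟨j.1, ℓ⟩
  rw [ovP_apply_mem j.2, ovP_apply_mem j.2] at h2
  exact h2

lemma blkT_ovP_not {K : Finset (Fin n)} {τ : ∀ p : (i : Fin n) × Fin (L i), Fin (q p.1)}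
    {z : ∀ j : {j : Fin n // j ∈ K}, Fin (L j.1) → Fin (q j.1)} {j : Fin n} (hj : j ∉ K) :
    blkT (ovP K τ z) j = blkT τ j :=
  funext fun ℓ => ovP_apply_not (p := ⟨j, ℓ⟩) hj

lemma blkT_ovP_mem {K : Finset (Fin n)} {τ : ∀ p : (i : Fin n) × Fin (L i), Fin (q p.1)}
    {z : ∀ j : {j : Fin n // j ∈ K}, Fin (L j.1) → Fin (q j.1)} (j : {j : Fin n // j ∈ K}) :
    blkT (ovP K τ z) j.1 = z j :=
  funext fun ℓ => ovP_apply_mem (p := ⟨j.1, ℓ⟩) j.2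

lemma ovP_fiber {K : Finset (Fin n)} {τ : ∀ p : (i : Fin n) × Fin (L i), Fin (q p.1)}
    {z : ∀ j : {j : Fin n // j ∈ K}, Fin (L j.1) → Fin (q j.1)} :
    ∀ p ∉ VbU K, ovP K τ z p = τ p :=
  fun p hp => ovP_apply_not fun hc => hp (mem_VbU.2 hc)

lemma supp_ovP {K : Finset (Fin n)} {τ σ : ∀ p : (i : Fin n) × Fin (L i), Fin (q p.1)}
    (h : condMeasD (Pμ μi) (VbU K) τ σ ≠ 0) : ∃ z, ovP K τ z = σ := by
  refine ⟨fun (j : {j : Fin n // j ∈ K}) => blkT σ j.1, funext fun p => ?_⟩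
  by_cases hK : p.1 ∈ K
  · rw [ovP_apply_mem hK]
    rfl
  · rw [ovP_apply_not hK]
    exact (condMeasD_ne_zero_imp h p (fun hc => hK (mem_VbU.1 hc))).symm

lemma ovP_ov_comm {K : Finset (Fin n)} {τ : ∀ p : (i : Fin n) × Fin (L i), Fin (q p.1)}
    {z : ∀ j : {j : Fin n // j ∈ K}, Fin (L j.1) → Fin (q j.1)} {i : Fin n} (hiK : i ∉ K)
    (x : Fin (L i) → Fin (q i)) :
    ovP K (ov τ i x) z = ov (ovP K τ z) i x := by
  funext p
  by_cases hK : p.1 ∈ K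
  · rw [ovP_apply_mem hK, ov_apply_ne (fun hc : p.1 = i => hiK (hc ▸ hK)),
      ovP_apply_mem hK]
  · rw [ovP_apply_not hK]
    rcases p with ⟨j, ℓ⟩
    by_cases hj : j = i
    · subst hj
      rw [ov_apply_mk, ov_apply_mk]
    · rw [ov_apply_ne hj, ov_apply_ne hj, ovP_apply_not hK]

/-- weights for a union of blocks -/
def wP (μi : ∀ i : Fin n, (Fin (L i) → Fin (q i)) → ℝ) (K : Finset (Fin n))
    (z : ∀ j : {j : Fin n // j ∈ K}, Fin (L j.1) → Fin (q j.1)) : ℝ :=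
  ∏ j : {j : Fin n // j ∈ K}, μi j.1 (z j)

lemma wP_nonneg (hpos : ∀ i x, 0 < μi i x) {K : Finset (Fin n)}
    (z : ∀ j : {j : Fin n // j ∈ K}, Fin (L j.1) → Fin (q j.1)) : 0 ≤ wP μi K z :=
  Finset.prod_nonneg fun j _ => (hpos j.1 (z j)).le

lemma sum_wP (h1 : ∀ i, ∑ x, μi i x = 1) (K : Finset (Fin n)) :
    ∑ z : ∀ j : {j : Fin n // j ∈ K}, Fin (L j.1) → Fin (q j.1), wP μi K z = 1 := by
  calc ∑ z : ∀ j : {j : Fin n // j ∈ K}, Fin (L j.1) → Fin (q j.1), wP μi K z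
      = ∏ j : {j : Fin n // j ∈ K}, ∑ x, μi j.1 x :=
        sum_prod_pi fun (j : {j : Fin n // j ∈ K}) x => μi j.1 x
    _ = 1 := Finset.prod_eq_one fun j _ => h1 j.1

lemma cm_ovP (hpos : ∀ i x, 0 < μi i x) (h1 : ∀ i, ∑ x, μi i x = 1) {K : Finset (Fin n)}
    {τ : ∀ p : (i : Fin n) × Fin (L i), Fin (q p.1)}
    (z : ∀ j : {j : Fin n // j ∈ K}, Fin (L j.1) → Fin (q j.1)) :
    condMeasD (Pμ μi) (VbU K) τ (ovP K τ z) = wP μi K z := by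
  rw [condMeasD_prod, if_pos ovP_fiber]
  calc ∏ j, (μi j (blkT (ovP K τ z) j) / ZD (μi j) (pull j (VbU K)) (blkT τ j))
      = ∏ j, (if j ∈ K then μi j (blkT (ovP K τ z) j) else 1) := by
        refine Finset.prod_congr rfl fun j _ => ?_
        by_cases hj : j ∈ K
        · rw [if_pos hj, pull_VbU_mem hj, ZD_univ, h1 j, div_one]
        · rw [if_neg hj, pull_VbU_notMem hj, ZD_empty, blkT_ovP_not hj]
          exact div_self (hpos j (blkT τ j)).ne'
    _ = ∏ j ∈ K, (if j ∈ K then μi j (blkT (ovP K τ z) j) else 1) :=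
        (Finset.prod_subset (Finset.subset_univ K) fun j _ hj => if_neg hj).symm
    _ = ∏ j ∈ K, μi j (blkT (ovP K τ z) j) :=
        Finset.prod_congr rfl fun j hj => if_pos hj
    _ = ∏ j ∈ K.attach, μi j.1 (blkT (ovP K τ z) j.1) := (Finset.prod_attach K _).symm
    _ = wP μi K z := by
        rw [wP, Finset.univ_eq_attach]
        exact Finset.prod_congr rfl fun j _ => by rw [blkT_ovP_mem j]

lemma condExpD_VbU (hpos : ∀ i x, 0 < μi i x) (h1 : ∀ i, ∑ x, μi i x = 1)
    (K : Finset (Fin n)) (g : (∀ p : (i : Fin n) × Fin (L i), Fin (q p.1)) → ℝ)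
    (τ : ∀ p : (i : Fin n) × Fin (L i), Fin (q p.1)) :
    condExpD (Pμ μi) (VbU K) g τ
      = ∑ z : ∀ j : {j : Fin n // j ∈ K}, Fin (L j.1) → Fin (q j.1),
          wP μi K z * g (ovP K τ z) := by
  calc condExpD (Pμ μi) (VbU K) g τ
      = ∑ z : ∀ j : {j : Fin n // j ∈ K}, Fin (L j.1) → Fin (q j.1),
          condMeasD (Pμ μi) (VbU K) τ (ovP K τ z) * g (ovP K τ z) :=
        sum_reindex (ovP_inj K τ) (fun σ hσ => supp_ovP hσ) g
    _ = ∑ z : ∀ j : {j : Fin n // j ∈ K}, Fin (L j.1) → Fin (q j.1),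
          wP μi K z * g (ovP K τ z) :=
        Finset.sum_congr rfl fun z _ => by rw [cm_ovP hpos h1 z]

/-! ### Jensen peeling and the Shearer transport step -/

lemma jensen_peel (hpos : ∀ i x, 0 < μi i x) (h1 : ∀ i, ∑ x, μi i x = 1)
    {i : Fin n} {K : Finset (Fin n)} (hiK : i ∉ K) {U : Finset (Fin (L i))}
    (g : (∀ p : (i : Fin n) × Fin (L i), Fin (q p.1)) → ℝ) (hg : ∀ σ, 0 ≤ g σ) :
    ∑ τ, Pμ μi τ * entAD (Pμ μi) (emb i U) (condExpD (Pμ μi) (VbU K) g) τ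
      ≤ ∑ τ, Pμ μi τ * entAD (Pμ μi) (emb i U) g τ := by
  have hμnn : ∀ σ, 0 ≤ Pμ μi σ := fun σ => (Pμ_pos hpos σ).le
  have shift : ∀ (τ : ∀ p : (i : Fin n) × Fin (L i), Fin (q p.1))
      (z : ∀ j : {j : Fin n // j ∈ K}, Fin (L j.1) → Fin (q j.1)),
      ent (condMeasD (Pμ μi) (emb i U) τ) (fun σ => g (ovP K σ z))
        = entAD (Pμ μi) (emb i U) g (ovP K τ z) := by
    intro τ z
    have l1 : ent (condMeasD (Pμ μi) (emb i U) τ) (fun σ => g (ovP K σ z))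
        = entAD (Pμ μi) (emb i U) (fun σ => g (ovP K σ z)) τ := entAD_eq.symm
    rw [l1, entAD_emb hpos _ τ, entAD_emb hpos g (ovP K τ z), blkT_ovP_not hiK]
    have e : (fun x => g (ovP K (ov τ i x) z)) = (fun x => g (ov (ovP K τ z) i x)) :=
      funext fun x => by rw [ovP_ov_comm hiK x]
    rw [e]
  have step : ∀ τ : ∀ p : (i : Fin n) × Fin (L i), Fin (q p.1),
      entAD (Pμ μi) (emb i U) (condExpD (Pμ μi) (VbU K) g) τ
        ≤ condExpD (Pμ μi) (VbU K) (entAD (Pμ μi) (emb i U) g) τ := by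
    intro τ
    rw [condExpD_VbU hpos h1 K (entAD (Pμ μi) (emb i U) g) τ]
    have hfe : condExpD (Pμ μi) (VbU K) g
        = fun σ => ∑ z : ∀ j : {j : Fin n // j ∈ K}, Fin (L j.1) → Fin (q j.1),
            wP μi K z * g (ovP K σ z) :=
      funext fun σ => condExpD_VbU hpos h1 K g σ
    rw [entAD_eq, hfe]
    have hJ := ent_jensen (ν := condMeasD (Pμ μi) (emb i U) τ) (wP μi K)
      (fun z σ => g (ovP K σ z)) (wP_nonneg hpos) (sum_wP h1 K) (fun z σ => hg _)
      (fun σ => condMeasD_nonneg hμnn) (sum_condMeasD' (Pμ_pos hpos))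
    refine le_trans hJ (le_of_eq (Finset.sum_congr rfl fun z _ => ?_))
    rw [shift τ z]
  calc ∑ τ, Pμ μi τ * entAD (Pμ μi) (emb i U) (condExpD (Pμ μi) (VbU K) g) τ
      ≤ ∑ τ, Pμ μi τ * condExpD (Pμ μi) (VbU K) (entAD (Pμ μi) (emb i U) g) τ :=
        Finset.sum_le_sum fun τ _ => mul_le_mul_of_nonneg_left (step τ) (hμnn τ)
    _ = ∑ τ, Pμ μi τ * entAD (Pμ μi) (emb i U) g τ := sum_mul_condExpD hμnn

lemma sum_fiber_mem {i : Fin n} (α : Finset ((i : Fin n) × Fin (L i)) → ℝ) (p : Fin (L i)) :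
    ∑ U ∈ univ.filter (fun U : Finset (Fin (L i)) => p ∈ U),
        (∑ A ∈ univ.filter (fun A => pull i A = U), α A)
      = ∑ A ∈ univ.filter
          (fun A => (⟨i, p⟩ : (i : Fin n) × Fin (L i)) ∈ A), α A := by
  rw [Finset.sum_filter, Finset.sum_filter]
  have e1 : ∀ U : Finset (Fin (L i)),
      (if p ∈ U then ∑ A ∈ univ.filter (fun A => pull i A = U), α A else 0)
      = ∑ A ∈ univ.filter (fun A => pull i A = U),
          (if (⟨i, p⟩ : (i : Fin n) × Fin (L i)) ∈ A then α A else 0) := by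
    intro U
    by_cases hp : p ∈ U
    · rw [if_pos hp]
      refine Finset.sum_congr rfl fun A hA => ?_
      rw [if_pos]
      rw [← mem_pull, (Finset.mem_filter.1 hA).2]
      exact hp
    · rw [if_neg hp]
      refine (Finset.sum_eq_zero fun A hA => ?_).symm
      rw [if_neg]
      intro hc
      exact hp ((Finset.mem_filter.1 hA).2 ▸ mem_pull.2 hc)
  rw [Finset.sum_congr rfl fun U _ => e1 U]
  exact Finset.sum_fiberwise univ (pull i)
    (fun A => if (⟨i, p⟩ : (i : Fin n) × Fin (L i)) ∈ A then α A else 0)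

lemma sum_fiber_apply {i : Fin n} (α : Finset ((i : Fin n) × Fin (L i)) → ℝ)
    (E : Finset (Fin (L i)) → ℝ) :
    ∑ U : Finset (Fin (L i)), (∑ A ∈ univ.filter (fun A => pull i A = U), α A) * E U
      = ∑ A : Finset ((i : Fin n) × Fin (L i)), α A * E (pull i A) := by
  have e1 : ∀ U : Finset (Fin (L i)),
      (∑ A ∈ univ.filter (fun A => pull i A = U), α A) * E U
      = ∑ A ∈ univ.filter (fun A => pull i A = U), α A * E (pull i A) := by
    intro U
    rw [Finset.sum_mul]
    refine Finset.sum_congr rfl fun A hA => ?_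
    rw [(Finset.mem_filter.1 hA).2]
  rw [Finset.sum_congr rfl fun U _ => e1 U]
  exact Finset.sum_fiberwise univ (pull i) (fun A => α A * E (pull i A))

/-- the transported Shearer step for one block -/
lemma shear_step (hpos : ∀ i x, 0 < μi i x) (h1 : ∀ i, ∑ x, μi i x = 1)
    (hL : ∀ i, 0 < L i) {i : Fin n} {Ci : ℝ}
    (hSh : ∀ αi : Finset (Fin (L i)) → ℝ,
      (∀ U, 0 ≤ αi U) → (∑ U : Finset (Fin (L i)), αi U = 1) →
      ∀ g : (Fin (L i) → Fin (q i)) → ℝ, (∀ x, 0 ≤ g x) →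
        gamD αi * ent (μi i) g ≤
          Ci * ∑ U : Finset (Fin (L i)), αi U * ∑ x, μi i x * entAD (μi i) U g x)
    (α : Finset ((i : Fin n) × Fin (L i)) → ℝ) (hα : ∀ A, 0 ≤ α A)
    (hα1 : ∑ A : Finset ((i : Fin n) × Fin (L i)), α A = 1)
    (h : (∀ p : (i : Fin n) × Fin (L i), Fin (q p.1)) → ℝ) (hh : ∀ σ, 0 ≤ h σ) :
    gamD α * ∑ τ, Pμ μi τ * entAD (Pμ μi) (Vb i) h τ
      ≤ Ci * ∑ A : Finset ((i : Fin n) × Fin (L i)), α A *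
          ∑ τ, Pμ μi τ * entAD (Pμ μi) (emb i (pull i A)) h τ := by
  have hμnn : ∀ σ, 0 ≤ Pμ μi σ := fun σ => (Pμ_pos hpos σ).le
  set αI : Finset (Fin (L i)) → ℝ :=
    fun U => ∑ A ∈ univ.filter (fun A => pull i A = U), α A with hαI
  have hαI0 : ∀ U, 0 ≤ αI U := fun U => Finset.sum_nonneg fun A _ => hα A
  have hαI1 : ∑ U : Finset (Fin (L i)), αI U = 1 := by
    rw [hαI]
    rw [Finset.sum_fiberwise univ (pull i) α]
    exact hα1
  have hgam : gamD α ≤ gamD αI := by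
    have hne : Nonempty (Fin (L i)) := ⟨⟨0, hL i⟩⟩
    refine le_gamD αI fun p => ?_
    calc gamD α
        ≤ ∑ A ∈ univ.filter
            (fun A => (⟨i, p⟩ : (i : Fin n) × Fin (L i)) ∈ A), α A :=
          gamD_le α ⟨i, p⟩
      _ = ∑ U ∈ univ.filter (fun U : Finset (Fin (L i)) => p ∈ U), αI U :=
          (sum_fiber_mem α p).symm
  have key : ∀ τ : ∀ p : (i : Fin n) × Fin (L i), Fin (q p.1),
      gamD α * entAD (Pμ μi) (Vb i) h τ ≤
        Ci * ∑ U : Finset (Fin (L i)), αI U *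
          ∑ x, μi i x * entAD (Pμ μi) (emb i U) h (ov τ i x) := by
    intro τ
    have hsh := hSh αI hαI0 hαI1 (fun x => h (ov τ i x)) (fun x => hh _)
    rw [entAD_Vb hpos h1 h τ]
    have hent0 : 0 ≤ ent (μi i) (fun x => h (ov τ i x)) :=
      ent_nonneg (fun x => (hpos i x).le) (h1 i) (fun x => hh _)
    refine le_trans (mul_le_mul_of_nonneg_right hgam hent0) (le_trans hsh (le_of_eq ?_))
    congr 1
    refine Finset.sum_congr rfl fun U _ => ?_
    congr 1
    refine Finset.sum_congr rfl fun x _ => ?_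
    congr 1
    rw [entAD_emb hpos h (ov τ i x), blkT_ov_self]
    have e : (fun x' => h (ov (ov τ i x) i x')) = (fun x' => h (ov τ i x')) :=
      funext fun x' => by rw [ov_ov]
    rw [e]
  calc gamD α * ∑ τ, Pμ μi τ * entAD (Pμ μi) (Vb i) h τ
      = ∑ τ, Pμ μi τ * (gamD α * entAD (Pμ μi) (Vb i) h τ) := by
        rw [Finset.mul_sum]
        exact Finset.sum_congr rfl fun τ _ => by ring
    _ ≤ ∑ τ, Pμ μi τ * (Ci * ∑ U : Finset (Fin (L i)), αI U *
          ∑ x, μi i x * entAD (Pμ μi) (emb i U) h (ov τ i x)) :=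
        Finset.sum_le_sum fun τ _ => mul_le_mul_of_nonneg_left (key τ) (hμnn τ)
    _ = Ci * ∑ U : Finset (Fin (L i)), αI U *
          ∑ τ, Pμ μi τ * ∑ x, μi i x * entAD (Pμ μi) (emb i U) h (ov τ i x) := by
        have l : ∀ τ : ∀ p : (i : Fin n) × Fin (L i), Fin (q p.1),
            Pμ μi τ * (Ci * ∑ U : Finset (Fin (L i)), αI U *
                ∑ x, μi i x * entAD (Pμ μi) (emb i U) h (ov τ i x))
            = ∑ U : Finset (Fin (L i)), Ci * (αI U * (Pμ μi τ *
                ∑ x, μi i x * entAD (Pμ μi) (emb i U) h (ov τ i x))) := by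
          intro τ
          rw [Finset.mul_sum, Finset.mul_sum]
          exact Finset.sum_congr rfl fun U _ => by ring
        have r : ∀ U : Finset (Fin (L i)),
            Ci * (αI U * ∑ τ, Pμ μi τ *
                ∑ x, μi i x * entAD (Pμ μi) (emb i U) h (ov τ i x))
            = ∑ τ, Ci * (αI U * (Pμ μi τ *
                ∑ x, μi i x * entAD (Pμ μi) (emb i U) h (ov τ i x))) := by
          intro U
          rw [Finset.mul_sum, Finset.mul_sum]
        rw [Finset.sum_congr rfl fun τ _ => l τ, Finset.mul_sum,
          Finset.sum_congr rfl fun U _ => r U]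
        exact Finset.sum_comm
    _ = Ci * ∑ U : Finset (Fin (L i)), αI U *
          ∑ τ, Pμ μi τ * entAD (Pμ μi) (emb i U) h τ := by
        refine congrArg _ (Finset.sum_congr rfl fun U _ => ?_)
        congr 1
        exact resample hpos h1 (entAD (Pμ μi) (emb i U) h)
    _ = Ci * ∑ A : Finset ((i : Fin n) × Fin (L i)), α A *
          ∑ τ, Pμ μi τ * entAD (Pμ μi) (emb i (pull i A)) h τ := by
        refine congrArg _ ?_
        exact sum_fiber_apply α
          (fun U => ∑ τ, Pμ μi τ * entAD (Pμ μi) (emb i U) h τ)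

end Product

/-- Tensorization of the approximate Shearer inequality for products: if
`μ = ⊗ᵢ μᵢ` and each component `μᵢ` on `[qᵢ]^{Lᵢ}` satisfies the approximate Shearer
inequality with constant `Cᵢ`, then `μ` satisfies it on the disjoint union of the
vertex sets with constant `max_i Cᵢ`. -/
theorem shearerTensorization (n : ℕ) (hn : 0 < n) (L : Fin n → ℕ) (hL : ∀ i, 0 < L i)
    (q : Fin n → ℕ)
    (μi : ∀ i : Fin n, (Fin (L i) → Fin (q i)) → ℝ)
    (hpos : ∀ i x, 0 < μi i x) (h1 : ∀ i, ∑ x, μi i x = 1)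
    (C : Fin n → ℝ)
    (hShear : ∀ i : Fin n, ∀ αi : Finset (Fin (L i)) → ℝ,
      (∀ U, 0 ≤ αi U) → (∑ U : Finset (Fin (L i)), αi U = 1) →
      ∀ g : (Fin (L i) → Fin (q i)) → ℝ, (∀ x, 0 ≤ g x) →
        gamD αi * ent (μi i) g ≤
          C i * ∑ U : Finset (Fin (L i)), αi U * ∑ τ, μi i τ * entAD (μi i) U g τ)
    (α : Finset ((i : Fin n) × Fin (L i)) → ℝ)
    (hα : ∀ A, 0 ≤ α A) (hα1 : ∑ A : Finset ((i : Fin n) × Fin (L i)), α A = 1)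
    (f : (∀ p : (i : Fin n) × Fin (L i), Fin (q p.1)) → ℝ) (hf : ∀ σ, 0 ≤ f σ) :
    gamD α * ent (fun σ : ∀ p : (i : Fin n) × Fin (L i), Fin (q p.1) => ∏ i, μi i (fun ℓ => σ ⟨i, ℓ⟩)) f ≤
      (⨆ i, C i) * ∑ A : Finset ((i : Fin n) × Fin (L i)), α A *
        ∑ τ, (∏ i, μi i (fun ℓ => τ ⟨i, ℓ⟩)) *
          entAD (fun σ : ∀ p : (i : Fin n) × Fin (L i), Fin (q p.1) => ∏ i, μi i (fun ℓ => σ ⟨i, ℓ⟩)) A f τ := by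
  have hq1 : ∀ i, 1 ≤ q i := by
    intro i
    by_contra hc
    push_neg at hc
    have hq0 : q i = 0 := by omega
    haveI hemp : IsEmpty (Fin (q i)) := by rw [hq0]; exact Fin.isEmpty
    haveI hem : IsEmpty (Fin (L i) → Fin (q i)) := ⟨fun g => (hemp.false (g ⟨0, hL i⟩))⟩
    have h2 := h1 i
    rw [Finset.univ_eq_empty, Finset.sum_empty] at h2
    exact one_ne_zero h2.symm
  show gamD α * ent (Pμ μi) f ≤ (⨆ i, C i) * ∑ A : Finset ((i : Fin n) × Fin (L i)), α A *
      ∑ τ, Pμ μi τ * entAD (Pμ μi) A f τ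
  have hp : ∀ σ, 0 < Pμ μi σ := Pμ_pos hpos
  have hμnn : ∀ σ, 0 ≤ Pμ μi σ := fun σ => (hp σ).le
  have hμ1 : ∑ σ, Pμ μi σ = 1 := sum_Pμ h1
  by_cases hdeg : ∀ i, q i = 1
  · -- degenerate case: every spin space is a singleton
    have hsub : ∀ σ τ : (∀ p : (i : Fin n) × Fin (L i), Fin (q p.1)), σ = τ := by
      intro σ τ
      funext p
      refine Fin.ext ?_
      have ha := (σ p).isLt
      have hb := (τ p).isLt
      have hq := hdeg p.1
      omega
    have σ0 : ∀ p : (i : Fin n) × Fin (L i), Fin (q p.1) :=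
      fun p => ⟨0, by have := hq1 p.1; omega⟩
    have hent0 : ent (Pμ μi) f = 0 :=
      ent_eq_zero_of_const_on_supp hμ1 (f σ0) (fun σ _ => congrArg f (hsub σ σ0))
    have hAD0 : ∀ (A : Finset ((i : Fin n) × Fin (L i))) τ, entAD (Pμ μi) A f τ = 0 :=
      fun A τ => entAD_eq_zero_of_invariant hp (fun τ' _ => congrArg f (hsub τ' τ))
    rw [hent0, mul_zero]
    have hz : ∑ A : Finset ((i : Fin n) × Fin (L i)), α A *
        ∑ τ, Pμ μi τ * entAD (Pμ μi) A f τ = 0 := by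
      refine Finset.sum_eq_zero fun A _ => ?_
      rw [Finset.sum_eq_zero fun τ _ => by rw [hAD0 A τ, mul_zero], mul_zero]
    rw [hz, mul_zero]
  · push_neg at hdeg
    obtain ⟨i0, hi0⟩ := hdeg
    have hq2 : 2 ≤ q i0 := by have := hq1 i0; omega
    -- the supremum of the constants is nonnegative
    have hCsup : 0 ≤ ⨆ i, C i := by
      have hx0lt : 0 < q i0 := by omega
      have hx1lt : 1 < q i0 := by omega
      set x0 : Fin (L i0) → Fin (q i0) := fun _ => ⟨0, hx0lt⟩ with hx0
      set x1 : Fin (L i0) → Fin (q i0) := fun _ => ⟨1, hx1lt⟩ with hx1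
      have hne : x0 ≠ x1 := by
        intro hcon
        have h2 := congrFun hcon ⟨0, hL i0⟩
        rw [hx0, hx1] at h2
        simp [Fin.ext_iff] at h2
      set g : (Fin (L i0) → Fin (q i0)) → ℝ := fun x => if x = x0 then (1:ℝ) else 0 with hgdef
      have hEnt : 0 < ent (μi i0) g := ent_indicator (hpos i0) (h1 i0) hne
      set αd : Finset (Fin (L i0)) → ℝ := fun U => if U = univ then (1:ℝ) else 0 with hαd
      have h0 : ∀ U, 0 ≤ αd U := by
        intro U
        rw [hαd]
        dsimp only
        split
        · exact zero_le_one
        · exact le_rfl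
      have hs1 : ∑ U : Finset (Fin (L i0)), αd U = 1 := by
        rw [hαd]
        exact (Finset.sum_ite_eq' univ univ (fun _ => (1:ℝ))).trans (if_pos (mem_univ _))
      have hg0 : ∀ x, 0 ≤ g x := by
        intro x
        rw [hgdef]
        dsimp only
        split
        · exact zero_le_one
        · exact le_rfl
      have hsh := hShear i0 αd h0 hs1 g hg0
      have hgam1 : gamD αd = 1 := by
        rw [gamD_eq]
        have hval : ∀ p : Fin (L i0),
            ∑ U ∈ univ.filter (fun U : Finset (Fin (L i0)) => p ∈ U), αd U = 1 := by
          intro p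
          rw [hαd]
          exact (Finset.sum_eq_single_of_mem (univ : Finset (Fin (L i0)))
            (Finset.mem_filter.2 ⟨mem_univ _, mem_univ p⟩)
            (fun b _ hb => if_neg hb)).trans (if_pos rfl)
        haveI : Nonempty (Fin (L i0)) := ⟨⟨0, hL i0⟩⟩
        rw [show (fun p : Fin (L i0) =>
          ∑ U ∈ univ.filter (fun U : Finset (Fin (L i0)) => p ∈ U), αd U)
          = fun _ => (1:ℝ) from funext hval]
        exact ciInf_const
      have hRHS : ∑ U : Finset (Fin (L i0)), αd U * ∑ τ, μi i0 τ * entAD (μi i0) U g τ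
          = ent (μi i0) g := by
        rw [hαd]
        have e : ∀ U : Finset (Fin (L i0)),
            (if U = univ then (1:ℝ) else 0) * (∑ τ, μi i0 τ * entAD (μi i0) U g τ)
            = if U = univ then (∑ τ, μi i0 τ * entAD (μi i0) U g τ) else 0 := by
          intro U
          split
          · rw [one_mul]
          · rw [zero_mul]
        rw [Finset.sum_congr rfl fun U _ => e U]
        rw [Finset.sum_ite_eq' univ univ
          (fun U => ∑ τ, μi i0 τ * entAD (μi i0) U g τ), if_pos (mem_univ _)]
        rw [Finset.sum_congr rfl fun τ _ => by rw [entAD_univ (h1 i0)]]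
        rw [← Finset.sum_mul, h1 i0, one_mul]
      rw [hgam1, one_mul, hRHS] at hsh
      have hC1 : 1 ≤ C i0 := by nlinarith
      calc (0:ℝ) ≤ C i0 := by linarith
        _ ≤ ⨆ i, C i := le_ciSup (Set.Finite.bddAbove (Set.finite_range C)) i0
    -- main telescoping argument
    have T0 : ∀ K : Finset (Fin n),
        gamD α * (ent (Pμ μi) f - ent (Pμ μi) (condExpD (Pμ μi) (VbU K) f))
        ≤ (⨆ i, C i) * ∑ A : Finset ((i : Fin n) × Fin (L i)), α A *
            ((∑ τ, Pμ μi τ * entAD (Pμ μi) A f τ)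
              - ∑ τ, Pμ μi τ * entAD (Pμ μi) A (condExpD (Pμ μi) (A ∩ VbU K) f) τ) := by
      intro K
      induction K using Finset.induction_on with
      | empty =>
        rw [VbU_empty, condExpD_empty hp, sub_self, mul_zero]
        rw [Finset.sum_eq_zero (fun A _ => by
          rw [Finset.inter_empty, condExpD_empty hp, sub_self, mul_zero]), mul_zero]
      | @insert i K hiK ih =>
        have hKnn : ∀ σ, 0 ≤ condExpD (Pμ μi) (VbU K) f σ :=
          fun σ => condExpD_nonneg hμnn hf
        have e0 : ∀ h : (∀ p : (i : Fin n) × Fin (L i), Fin (q p.1)) → ℝ,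
            ∑ τ, Pμ μi τ * entAD (Pμ μi) univ h τ = ent (Pμ μi) h := by
          intro h
          rw [Finset.sum_congr rfl fun τ _ => by rw [entAD_univ hμ1]]
          rw [← Finset.sum_mul, hμ1, one_mul]
        have hIndep : IndepOn (insert i K)
            (condExpD (Pμ μi) (Vb i) (condExpD (Pμ μi) (VbU K) f)) :=
          indepOn_condExpD_Vb hpos h1 hiK indepOn_condExpD_VbU
        -- (S1)
        have hS1 : ent (Pμ μi) (condExpD (Pμ μi) (VbU K) f)
            = (∑ τ, Pμ μi τ * entAD (Pμ μi) (Vb i) (condExpD (Pμ μi) (VbU K) f) τ)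
              + ent (Pμ μi) (condExpD (Pμ μi) (VbU (insert i K)) f) := by
          have c1 := entAD_chain (μ := Pμ μi) (f := condExpD (Pμ μi) (VbU K) f)
            (A := univ) (B := VbU (insert i K)) hp hμ1 (Finset.subset_univ _)
          have c2 := entAD_chain (μ := Pμ μi) (f := condExpD (Pμ μi) (VbU K) f)
            (A := VbU (insert i K)) (B := Vb i) hp hμ1
            (Vb_subset_VbU (mem_insert_self i K))
          have htow : condExpD (Pμ μi) (VbU (insert i K)) (condExpD (Pμ μi) (VbU K) f)
              = condExpD (Pμ μi) (VbU (insert i K)) f :=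
            condExpD_tower hp (VbU_mono (Finset.subset_insert i K))
          have hzero : ∑ τ, Pμ μi τ * entAD (Pμ μi) (VbU (insert i K))
              (condExpD (Pμ μi) (Vb i) (condExpD (Pμ μi) (VbU K) f)) τ = 0 :=
            Finset.sum_eq_zero fun τ _ => by
              rw [entAD_zero_of_indep hpos hIndep τ, mul_zero]
          rw [e0, htow, e0] at c1
          rw [hzero, add_zero] at c2
          rw [c1, c2]
        -- (S3)
        have hS3 : ∀ A : Finset ((i : Fin n) × Fin (L i)),
            (∑ τ, Pμ μi τ * entAD (Pμ μi) (emb i (pull i A))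
                (condExpD (Pμ μi) (VbU K) f) τ)
            ≤ (∑ τ, Pμ μi τ * entAD (Pμ μi) A (condExpD (Pμ μi) (A ∩ VbU K) f) τ)
              - ∑ τ, Pμ μi τ * entAD (Pμ μi) A
                  (condExpD (Pμ μi) (A ∩ VbU (insert i K)) f) τ := by
          intro A
          have hAnn : ∀ σ, 0 ≤ condExpD (Pμ μi) (A ∩ VbU K) f σ :=
            fun σ => condExpD_nonneg hμnn hf
          have htow1 : condExpD (Pμ μi) (A ∩ VbU (insert i K))
              (condExpD (Pμ μi) (A ∩ VbU K) f)
              = condExpD (Pμ μi) (A ∩ VbU (insert i K)) f :=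
            condExpD_tower hp
              (Finset.inter_subset_inter (Finset.Subset.refl A)
                (VbU_mono (Finset.subset_insert i K)))
          have hchain := entAD_chain (μ := Pμ μi)
            (f := condExpD (Pμ μi) (A ∩ VbU K) f)
            (A := A) (B := A ∩ VbU (insert i K)) hp hμ1 Finset.inter_subset_left
          rw [htow1] at hchain
          have hmono := entAD_mono (μ := Pμ μi)
            (f := condExpD (Pμ μi) (A ∩ VbU K) f) hp hμ1
            (B := A ∩ Vb i) (A := A ∩ VbU (insert i K))
            (Finset.inter_subset_inter (Finset.Subset.refl A)
              (Vb_subset_VbU (mem_insert_self i K))) hAnn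
          have hAint : A ∩ Vb i = emb i (pull i A) := inter_Vb_eq_emb_pull
          have hpeel : (∑ τ, Pμ μi τ * entAD (Pμ μi) (emb i (pull i A))
              (condExpD (Pμ μi) (VbU K) f) τ)
              ≤ ∑ τ, Pμ μi τ * entAD (Pμ μi) (emb i (pull i A))
                  (condExpD (Pμ μi) (A ∩ VbU K) f) τ := by
            have htow2 : condExpD (Pμ μi) (VbU K)
                (condExpD (Pμ μi) (A ∩ VbU K) f) = condExpD (Pμ μi) (VbU K) f :=
              condExpD_tower hp Finset.inter_subset_right
            have hjp := jensen_peel hpos h1 hiK (U := pull i A)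
              (condExpD (Pμ μi) (A ∩ VbU K) f) hAnn
            rw [htow2] at hjp
            exact hjp
          rw [hAint] at hmono
          linarith [hpeel, hmono, hchain]
        -- (S2)
        have hS2 := shear_step hpos h1 hL (hShear i) α hα hα1
          (condExpD (Pμ μi) (VbU K) f) hKnn
        have hE0 : ∀ A : Finset ((i : Fin n) × Fin (L i)),
            0 ≤ ∑ τ, Pμ μi τ * entAD (Pμ μi) (emb i (pull i A))
              (condExpD (Pμ μi) (VbU K) f) τ :=
          fun A => sum_entAD_nonneg hp hKnn
        have hXnn : 0 ≤ ∑ A : Finset ((i : Fin n) × Fin (L i)), α A *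
            ∑ τ, Pμ μi τ * entAD (Pμ μi) (emb i (pull i A))
              (condExpD (Pμ μi) (VbU K) f) τ :=
          Finset.sum_nonneg fun A _ => mul_nonneg (hα A) (hE0 A)
        have hCle : C i ≤ ⨆ i, C i :=
          le_ciSup (Set.Finite.bddAbove (Set.finite_range C)) i
        have h2 : (∑ A : Finset ((i : Fin n) × Fin (L i)), α A *
            ∑ τ, Pμ μi τ * entAD (Pμ μi) (emb i (pull i A))
              (condExpD (Pμ μi) (VbU K) f) τ)
            ≤ ∑ A : Finset ((i : Fin n) × Fin (L i)), α A *
              ((∑ τ, Pμ μi τ * entAD (Pμ μi) A (condExpD (Pμ μi) (A ∩ VbU K) f) τ)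
                - ∑ τ, Pμ μi τ * entAD (Pμ μi) A
                    (condExpD (Pμ μi) (A ∩ VbU (insert i K)) f) τ) :=
          Finset.sum_le_sum fun A _ => mul_le_mul_of_nonneg_left (hS3 A) (hα A)
        have hmid : gamD α * (∑ τ, Pμ μi τ * entAD (Pμ μi) (Vb i)
            (condExpD (Pμ μi) (VbU K) f) τ)
            ≤ (⨆ i, C i) * ∑ A : Finset ((i : Fin n) × Fin (L i)), α A *
              ((∑ τ, Pμ μi τ * entAD (Pμ μi) A (condExpD (Pμ μi) (A ∩ VbU K) f) τ)
                - ∑ τ, Pμ μi τ * entAD (Pμ μi) A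
                    (condExpD (Pμ μi) (A ∩ VbU (insert i K)) f) τ) := by
          refine le_trans hS2 (le_trans (mul_le_mul_of_nonneg_right hCle hXnn)
            (mul_le_mul_of_nonneg_left h2 hCsup))
        have hsum_split : (∑ A : Finset ((i : Fin n) × Fin (L i)), α A *
            ((∑ τ, Pμ μi τ * entAD (Pμ μi) A f τ)
              - ∑ τ, Pμ μi τ * entAD (Pμ μi) A
                  (condExpD (Pμ μi) (A ∩ VbU (insert i K)) f) τ))
            = (∑ A : Finset ((i : Fin n) × Fin (L i)), α A *
                ((∑ τ, Pμ μi τ * entAD (Pμ μi) A f τ)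
                  - ∑ τ, Pμ μi τ * entAD (Pμ μi) A
                      (condExpD (Pμ μi) (A ∩ VbU K) f) τ))
              + ∑ A : Finset ((i : Fin n) × Fin (L i)), α A *
                  ((∑ τ, Pμ μi τ * entAD (Pμ μi) A
                      (condExpD (Pμ μi) (A ∩ VbU K) f) τ)
                    - ∑ τ, Pμ μi τ * entAD (Pμ μi) A
                        (condExpD (Pμ μi) (A ∩ VbU (insert i K)) f) τ) := by
          rw [← Finset.sum_add_distrib]
          exact Finset.sum_congr rfl fun A _ => by ring
        calc gamD α * (ent (Pμ μi) f
              - ent (Pμ μi) (condExpD (Pμ μi) (VbU (insert i K)) f))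
            = gamD α * (ent (Pμ μi) f - ent (Pμ μi) (condExpD (Pμ μi) (VbU K) f))
              + gamD α * (∑ τ, Pμ μi τ * entAD (Pμ μi) (Vb i)
                  (condExpD (Pμ μi) (VbU K) f) τ) := by
              rw [hS1]
              ring
          _ ≤ (⨆ i, C i) * (∑ A : Finset ((i : Fin n) × Fin (L i)), α A *
                ((∑ τ, Pμ μi τ * entAD (Pμ μi) A f τ)
                  - ∑ τ, Pμ μi τ * entAD (Pμ μi) A
                      (condExpD (Pμ μi) (A ∩ VbU K) f) τ))
              + (⨆ i, C i) * ∑ A : Finset ((i : Fin n) × Fin (L i)), α A *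
                  ((∑ τ, Pμ μi τ * entAD (Pμ μi) A
                      (condExpD (Pμ μi) (A ∩ VbU K) f) τ)
                    - ∑ τ, Pμ μi τ * entAD (Pμ μi) A
                        (condExpD (Pμ μi) (A ∩ VbU (insert i K)) f) τ) :=
              add_le_add ih hmid
          _ = (⨆ i, C i) * ∑ A : Finset ((i : Fin n) × Fin (L i)), α A *
                ((∑ τ, Pμ μi τ * entAD (Pμ μi) A f τ)
                  - ∑ τ, Pμ μi τ * entAD (Pμ μi) A
                      (condExpD (Pμ μi) (A ∩ VbU (insert i K)) f) τ) := by
              rw [hsum_split]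
              ring
    -- conclude from K = univ
    have hRuniv : ent (Pμ μi) (condExpD (Pμ μi) (VbU (univ : Finset (Fin n))) f) = 0 := by
      have e : condExpD (Pμ μi) (VbU (univ : Finset (Fin n))) f
          = fun _ => ∑ σ, Pμ μi σ * f σ := by
        rw [VbU_univ]
        funext τ
        show ∑ σ, condMeasD (Pμ μi) univ τ σ * f σ = ∑ σ, Pμ μi σ * f σ
        rw [condMeasD_univ hμ1]
      rw [e]
      exact ent_const hμ1 _
    have hQuniv : ∀ (A : Finset ((i : Fin n) × Fin (L i))) τ,
        entAD (Pμ μi) A (condExpD (Pμ μi) (A ∩ VbU (univ : Finset (Fin n))) f) τ = 0 := by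
      intro A τ
      rw [VbU_univ, Finset.inter_univ]
      exact entAD_eq_zero_of_invariant hp (fun τ' hτ' => condExpD_invariant hτ')
    have hfin := T0 univ
    rw [hRuniv, sub_zero] at hfin
    have hz : ∀ A : Finset ((i : Fin n) × Fin (L i)),
        ∑ τ, Pμ μi τ * entAD (Pμ μi) A
          (condExpD (Pμ μi) (A ∩ VbU (univ : Finset (Fin n))) f) τ = 0 :=
      fun A => Finset.sum_eq_zero fun τ _ => by rw [hQuniv A τ, mul_zero]
    rw [Finset.sum_congr rfl (fun A _ => by rw [hz A, sub_zero])] at hfin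
    exact hfin
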